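/- arXiv:1103.2073 — 2 statements merged into one kernel-verified Lean document; each statement's English description precedes it below -/
import Mathlib

section
/- Let f be a transcendental meromorphic function on ℂ and α ∈ ℝ, β > -1. Suppose the family f_h(z) = h^{-α} f(h + h^{-β} z), for |h| ≥ 1, is normal in ℂ (so the spherical derivatives f_h^#(0) are uniformly bounded). Then the spherical derivative of f satisfies f^#(z) = O(|z|^{|α|+β}) as z → ∞. -/
open Complex Filter Set Topology OnePoint

noncomputable section
attribute [local instance] Classical.propDecidable

/-- Inversion on the Riemann sphere `ℂ ∪ {∞}`. -/
def sinv : OnePoint ℂ → OnePoint ℂ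
  | ∞ => ((0 : ℂ) : OnePoint ℂ)
  | (a : ℂ) => if a = 0 then ∞ else ((a⁻¹ : ℂ) : OnePoint ℂ)

/-- Multiplication of a point of the sphere by a (nonzero) complex scalar. -/
def smulS (c : ℂ) : OnePoint ℂ → OnePoint ℂ
  | ∞ => ∞
  | (a : ℂ) => ((c * a : ℂ) : OnePoint ℂ)

/-- The chordal (spherical) distance on the Riemann sphere. -/
def sdist : OnePoint ℂ → OnePoint ℂ → ℝ
  | (a : ℂ), (b : ℂ) => ‖a - b‖ / (Real.sqrt (1 + ‖a‖ ^ 2) * Real.sqrt (1 + ‖b‖ ^ 2))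
  | (a : ℂ), ∞ => 1 / Real.sqrt (1 + ‖a‖ ^ 2)
  | ∞, (b : ℂ) => 1 / Real.sqrt (1 + ‖b‖ ^ 2)
  | ∞, ∞ => 0

/-- A sphere-valued function is meromorphic on `U` if near every point of `U` it is either
given by an analytic function or by the reciprocal of an analytic function. -/
def MeromorphicSphereOn (f : ℂ → OnePoint ℂ) (U : Set ℂ) : Prop :=
  ∀ z ∈ U, (∃ g : ℂ → ℂ, AnalyticAt ℂ g z ∧ ∀ᶠ w in 𝓝 z, f w = (g w : OnePoint ℂ)) ∨
           (∃ g : ℂ → ℂ, AnalyticAt ℂ g z ∧ ∀ᶠ w in 𝓝 z, f w = sinv (g w : OnePoint ℂ))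

/-- `f` is a rational function. -/
def IsRat (f : ℂ → OnePoint ℂ) : Prop :=
  ∃ p q : Polynomial ℂ, q ≠ 0 ∧ ∀ z : ℂ, q.eval z ≠ 0 → f z = ((p.eval z / q.eval z : ℂ) : OnePoint ℂ)

/-- The spherical derivative `f^#` (defined as the limit of chordal difference quotients). -/
def sphDeriv (f : ℂ → OnePoint ℂ) (z : ℂ) : ℝ :=
  limUnder (𝓝[≠] z) fun w => sdist (f w) (f z) / ‖w - z‖

/-- Locally uniform convergence with respect to the spherical metric on `U`. -/
def SphConvOn (F : ℕ → ℂ → OnePoint ℂ) (φ : ℂ → OnePoint ℂ) (U : Set ℂ) : Prop :=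
  ∀ K : Set ℂ, K ⊆ U → IsCompact K → ∀ ε : ℝ, 0 < ε →
    ∀ᶠ n in atTop, ∀ z ∈ K, sdist (F n z) (φ z) < ε

/-- A family of sphere-valued functions is normal on `U` if every sequence from the family
has a subsequence converging locally uniformly on `U` in the spherical metric. -/
def NormalOn (𝓕 : Set (ℂ → OnePoint ℂ)) (U : Set ℂ) : Prop :=
  ∀ F : ℕ → ℂ → OnePoint ℂ, (∀ n, F n ∈ 𝓕) →
    ∃ σ : ℕ → ℕ, StrictMono σ ∧ ∃ φ : ℂ → OnePoint ℂ, SphConvOn (fun n => F (σ n)) φ U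

/-- The rescaled function `f_h(z) = h^{-α} f(h + h^{-β} z)`. -/
def rescale (f : ℂ → OnePoint ℂ) (α β : ℝ) (h : ℂ) : ℂ → OnePoint ℂ :=
  fun z => smulS (h ^ (-α : ℂ)) (f (h + h ^ (-β : ℂ) * z))

/-- The rescaling family `(f_h)_{|h| ≥ 1}`. -/
def YFamily (f : ℂ → OnePoint ℂ) (α β : ℝ) : Set (ℂ → OnePoint ℂ) :=
  {g | ∃ h : ℂ, 1 ≤ ‖h‖ ∧ g = rescale f α β h}

/-- No limit function of the rescaling family along `h_n → ∞` is constant (on `U`). -/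
def NoConstLimitOn (f : ℂ → OnePoint ℂ) (α β : ℝ) (U : Set ℂ) : Prop :=
  ∀ (h : ℕ → ℂ) (φ : ℂ → OnePoint ℂ), (∀ n, 1 ≤ ‖h n‖) →
    Tendsto (fun n => ‖h n‖) atTop atTop →
    SphConvOn (fun n => rescale f α β (h n)) φ U →
    ¬ ∃ c : OnePoint ℂ, ∀ z ∈ U, φ z = c

/-- The generalised Yosida class `Y_{α,β}` (for `β > -1`). -/
structure MemY (α β : ℝ) (f : ℂ → OnePoint ℂ) : Prop where
  merom : MeromorphicSphereOn f Set.univ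
  trans : ¬ IsRat f
  normal : NormalOn (YFamily f α β) Set.univ
  nonconst : NoConstLimitOn f α β Set.univ

/-- The order of `f` at a `c`-point `z`, counted via an analytic local representative;
it is `0` if `f z ≠ c`. -/
def cOrder (f : ℂ → OnePoint ℂ) (c : ℂ) (z : ℂ) : ℕ∞ :=
  if f z = (c : OnePoint ℂ) then
    sInf {n : ℕ∞ | ∃ g : ℂ → ℂ, ∃ hg : AnalyticAt ℂ (fun w => g w - c) z,
      (∀ᶠ w in 𝓝 z, f w = (g w : OnePoint ℂ)) ∧ analyticOrderAt (fun w => g w - c) z = n}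
  else 0

/-- The order of the pole of `f` at `z` (`0` if `z` is not a pole). -/
def pOrder (f : ℂ → OnePoint ℂ) (z : ℂ) : ℕ∞ :=
  if f z = ∞ then
    sInf {n : ℕ∞ | ∃ g : ℂ → ℂ, ∃ hg : AnalyticAt ℂ g z,
      (∀ᶠ w in 𝓝 z, f w = sinv (g w : OnePoint ℂ)) ∧ analyticOrderAt g z = n}
  else 0

/-- The set of poles of `f`. -/
def poles (f : ℂ → OnePoint ℂ) : Set ℂ := {z | f z = ∞}

/-- The set of zeros of `f`. -/
def zeros (f : ℂ → OnePoint ℂ) : Set ℂ := {z | f z = ((0 : ℂ) : OnePoint ℂ)}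

/-- The disc `Δ_ε(h) = {z : |z - h| < ε |h|^{-β}}`. -/
def Δ (β : ℝ) (ε : ℝ) (h : ℂ) : Set ℂ := Metric.ball h (ε * ‖h‖ ^ (-β))

end

noncomputable section
attribute [local instance] Classical.propDecidable

lemma sdist_cc (a b : ℂ) : sdist a b = ‖a - b‖ / (Real.sqrt (1 + ‖a‖ ^ 2) * Real.sqrt (1 + ‖b‖ ^ 2)) := rfl
lemma sdist_ci (a : ℂ) : sdist a ∞ = 1 / Real.sqrt (1 + ‖a‖ ^ 2) := rfl
lemma sdist_ic (b : ℂ) : sdist ∞ b = 1 / Real.sqrt (1 + ‖b‖ ^ 2) := rfl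
lemma sdist_ii : sdist ∞ ∞ = 0 := rfl

def Phi : OnePoint ℂ → EuclideanSpace ℝ (Fin 3)
  | ∞ => WithLp.toLp 2 (![0, 0, 1] : Fin 3 → ℝ)
  | (a : ℂ) => WithLp.toLp 2 ![a.re / (1 + ‖a‖ ^ 2), a.im / (1 + ‖a‖ ^ 2), ‖a‖ ^ 2 / (1 + ‖a‖ ^ 2)]

lemma Phi_c (a : ℂ) : Phi a = WithLp.toLp 2 ![a.re / (1 + ‖a‖ ^ 2), a.im / (1 + ‖a‖ ^ 2), ‖a‖ ^ 2 / (1 + ‖a‖ ^ 2)] := rfl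
lemma Phi_i : Phi ∞ = WithLp.toLp 2 (![0, 0, 1] : Fin 3 → ℝ) := rfl

lemma norm_sq_eq (a : ℂ) : ‖a‖ ^ 2 = a.re ^ 2 + a.im ^ 2 := by
  rw [← Complex.normSq_eq_norm_sq, Complex.normSq_apply]; ring

lemma dist3 (x y : EuclideanSpace ℝ (Fin 3)) :
    dist x y = Real.sqrt ((x 0 - y 0) ^ 2 + ((x 1 - y 1) ^ 2 + ((x 2 - y 2) ^ 2 + 0))) := by
  rw [EuclideanSpace.dist_eq]
  congr 1
  rw [Fin.sum_univ_succ, Fin.sum_univ_succ, Fin.sum_univ_succ, Fin.sum_univ_zero]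
  simp [Real.dist_eq, sq_abs]

lemma one_add_pos (a : ℂ) : (0:ℝ) < 1 + ‖a‖ ^ 2 := by positivity

lemma sqrt_one_div (x : ℝ) : 1 / Real.sqrt x = Real.sqrt (1 / x) := by
  rw [one_div, one_div, Real.sqrt_inv]

lemma sdist_eq_dist (x y : OnePoint ℂ) : sdist x y = dist (Phi x) (Phi y) := by
  induction x using OnePoint.rec with
  | infty =>
    induction y using OnePoint.rec with
    | infty => simp [sdist_ii, Phi_i]
    | coe b =>
      have hB := one_add_pos b
      rw [sdist_ic, Phi_i, Phi_c, dist3]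
      simp only [PiLp.toLp_apply, Matrix.cons_val_zero, Matrix.cons_val_one, Matrix.head_cons,
        Matrix.cons_val_two, Matrix.tail_cons]
      have key : ((0:ℝ) - b.re / (1 + ‖b‖ ^ 2)) ^ 2 + (((0:ℝ) - b.im / (1 + ‖b‖ ^ 2)) ^ 2 + (((1:ℝ) - ‖b‖ ^ 2 / (1 + ‖b‖ ^ 2)) ^ 2 + 0)) = 1 / (1 + ‖b‖ ^ 2) := by
        rw [norm_sq_eq] at *; field_simp; ring
      rw [key, ← sqrt_one_div]
  | coe a =>
    have hA := one_add_pos a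
    induction y using OnePoint.rec with
    | infty =>
      rw [sdist_ci, Phi_i, Phi_c, dist3]
      simp only [PiLp.toLp_apply, Matrix.cons_val_zero, Matrix.cons_val_one, Matrix.head_cons,
        Matrix.cons_val_two, Matrix.tail_cons]
      have key : (a.re / (1 + ‖a‖ ^ 2) - 0) ^ 2 + ((a.im / (1 + ‖a‖ ^ 2) - 0) ^ 2 + ((‖a‖ ^ 2 / (1 + ‖a‖ ^ 2) - 1) ^ 2 + 0)) = 1 / (1 + ‖a‖ ^ 2) := by
        rw [norm_sq_eq] at *; field_simp; ring
      rw [key, ← sqrt_one_div]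
    | coe b =>
      have hB := one_add_pos b
      rw [sdist_cc, Phi_c, Phi_c, dist3]
      simp only [PiLp.toLp_apply, Matrix.cons_val_zero, Matrix.cons_val_one, Matrix.head_cons,
        Matrix.cons_val_two, Matrix.tail_cons]
      have key : (a.re / (1 + ‖a‖ ^ 2) - b.re / (1 + ‖b‖ ^ 2)) ^ 2 + ((a.im / (1 + ‖a‖ ^ 2) - b.im / (1 + ‖b‖ ^ 2)) ^ 2 + ((‖a‖ ^ 2 / (1 + ‖a‖ ^ 2) - ‖b‖ ^ 2 / (1 + ‖b‖ ^ 2)) ^ 2 + 0)) = ‖a - b‖ ^ 2 / ((1 + ‖a‖ ^ 2) * (1 + ‖b‖ ^ 2)) := by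
        rw [norm_sq_eq, norm_sq_eq, norm_sq_eq, Complex.sub_re, Complex.sub_im] at *
        field_simp; ring
      rw [key, Real.sqrt_div (sq_nonneg _), Real.sqrt_sq (norm_nonneg _), Real.sqrt_mul hA.le]

lemma sdist_triangle (x y z : OnePoint ℂ) : sdist x z ≤ sdist x y + sdist y z := by
  rw [sdist_eq_dist, sdist_eq_dist, sdist_eq_dist]; exact dist_triangle _ _ _

lemma sdist_nonneg (x y : OnePoint ℂ) : 0 ≤ sdist x y := by
  rw [sdist_eq_dist]; exact dist_nonneg

lemma sdist_comm (x y : OnePoint ℂ) : sdist x y = sdist y x := by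
  rw [sdist_eq_dist, sdist_eq_dist]; exact dist_comm _ _


lemma smulS_i (c : ℂ) : smulS c ∞ = ∞ := rfl
lemma smulS_c (c a : ℂ) : smulS c (a : OnePoint ℂ) = ((c * a : ℂ) : OnePoint ℂ) := rfl
lemma sinv_i : sinv ∞ = ((0:ℂ) : OnePoint ℂ) := rfl
lemma sinv_zero : sinv ((0:ℂ) : OnePoint ℂ) = ∞ := by simp [sinv]
lemma sinv_c {a : ℂ} (ha : a ≠ 0) : sinv (a : OnePoint ℂ) = ((a⁻¹ : ℂ) : OnePoint ℂ) := by
  simp [sinv, ha]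

lemma sinv_sinv (x : OnePoint ℂ) : sinv (sinv x) = x := by
  induction x using OnePoint.rec with
  | infty => rw [sinv_i, sinv_zero]
  | coe a =>
    by_cases ha : a = 0
    · subst ha; rw [sinv_zero, sinv_i]
    · rw [sinv_c ha, sinv_c (inv_ne_zero ha), inv_inv]

lemma key_inv (t : ℝ) (ht : 0 < t) :
    Real.sqrt (1 + (t⁻¹) ^ 2) = Real.sqrt (1 + t ^ 2) / t := by
  rw [show (1:ℝ) + t⁻¹ ^ 2 = (1 + t ^ 2) / t ^ 2 by field_simp; ring,
    Real.sqrt_div (by positivity), Real.sqrt_sq ht.le]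

lemma sdist_sinv (x y : OnePoint ℂ) : sdist (sinv x) (sinv y) = sdist x y := by
  have main : ∀ b : ℂ, b ≠ 0 → sdist ((0:ℂ) : OnePoint ℂ) (sinv b) = sdist ∞ (b : OnePoint ℂ) := by
    intro b hb
    have ht : (0:ℝ) < ‖b‖ := norm_pos_iff.2 hb
    rw [sinv_c hb, sdist_cc, sdist_ic, norm_inv, key_inv _ ht, norm_zero, zero_sub, norm_neg,
      norm_inv, show (1:ℝ) + 0 ^ 2 = 1 by norm_num, Real.sqrt_one, one_mul,
      div_div_eq_mul_div, inv_mul_cancel₀ ht.ne']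
  have main' : ∀ b : ℂ, b ≠ 0 → sdist ∞ (sinv b) = sdist ((0:ℂ) : OnePoint ℂ) (b : OnePoint ℂ) := by
    intro b hb
    have ht : (0:ℝ) < ‖b‖ := norm_pos_iff.2 hb
    have h2 : (0:ℝ) < Real.sqrt (1 + ‖b‖ ^ 2) := Real.sqrt_pos.2 (by positivity)
    rw [sinv_c hb, sdist_ic, sdist_cc, norm_inv, key_inv _ ht, norm_zero, zero_sub, norm_neg,
      show (1:ℝ) + 0 ^ 2 = 1 by norm_num, Real.sqrt_one, one_mul, one_div_div]
  have main2 : ∀ a b : ℂ, a ≠ 0 → b ≠ 0 →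
      sdist (sinv a) (sinv b) = sdist (a : OnePoint ℂ) (b : OnePoint ℂ) := by
    intro a b ha hb
    have hs : (0:ℝ) < ‖a‖ := norm_pos_iff.2 ha
    have ht : (0:ℝ) < ‖b‖ := norm_pos_iff.2 hb
    have h1 : (0:ℝ) < Real.sqrt (1 + ‖a‖ ^ 2) := Real.sqrt_pos.2 (by positivity)
    have h2 : (0:ℝ) < Real.sqrt (1 + ‖b‖ ^ 2) := Real.sqrt_pos.2 (by positivity)
    rw [sinv_c ha, sinv_c hb, sdist_cc, sdist_cc, norm_inv, norm_inv, key_inv _ hs, key_inv _ ht]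
    have hab : a⁻¹ - b⁻¹ = (b - a) / (a * b) := by field_simp
    rw [hab, norm_div, norm_mul, norm_sub_rev b a]
    rw [div_mul_div_comm, div_div_div_eq]
    rw [mul_comm (‖a‖ * ‖b‖) (Real.sqrt (1 + ‖a‖ ^ 2) * Real.sqrt (1 + ‖b‖ ^ 2)), mul_div_mul_right _ _ (by positivity : ‖a‖ * ‖b‖ ≠ 0)]
  induction x using OnePoint.rec with
  | infty =>
    induction y using OnePoint.rec with
    | infty => rw [sinv_i, sdist_cc, sdist_ii]; simp
    | coe b =>
      rw [sinv_i]
      by_cases hb : b = 0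
      · subst hb; rw [sinv_zero, sdist_ci, sdist_ic]
      · exact main b hb
  | coe a =>
    induction y using OnePoint.rec with
    | infty =>
      rw [sinv_i, sdist_comm (sinv _) _, sdist_comm (_ : OnePoint ℂ) ∞]
      by_cases ha : a = 0
      · subst ha; rw [sinv_zero, sdist_ci, sdist_ic]
      · exact main a ha
    | coe b =>
      by_cases ha : a = 0
      · subst ha
        rw [sinv_zero]
        by_cases hb : b = 0
        · subst hb; rw [sinv_zero, sdist_ii, sdist_cc]; simp
        · exact main' b hb
      · by_cases hb : b = 0
        · subst hb
          rw [sinv_zero, sdist_comm (sinv _) ∞, sdist_comm (_ : OnePoint ℂ) ((0:ℂ) : OnePoint ℂ)]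
          exact main' a ha
        · exact main2 a b ha hb

lemma sqrt_scale {c u : ℝ} (hc : 0 ≤ c) (hu : 0 ≤ u) :
    Real.sqrt (1 + c ^ 2 * u) ≤ max 1 c * Real.sqrt (1 + u) := by
  have h1 : max 1 c * Real.sqrt (1 + u) = Real.sqrt ((max 1 c) ^ 2 * (1 + u)) := by
    rw [Real.sqrt_mul (by positivity), Real.sqrt_sq (by positivity)]
  rw [h1]
  apply Real.sqrt_le_sqrt
  have hm1 : (1:ℝ) ≤ (max 1 c) ^ 2 := by nlinarith [le_max_left 1 c]
  have hm2 : c ^ 2 ≤ (max 1 c) ^ 2 := by nlinarith [le_max_right 1 c, le_max_left 1 c]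
  nlinarith

lemma sdist_smul_le (c : ℂ) (hc : c ≠ 0) (x y : OnePoint ℂ) :
    sdist x y ≤ max ‖c‖ ‖c‖⁻¹ * sdist (smulS c x) (smulS c y) := by
  have hc0 : (0:ℝ) < ‖c‖ := norm_pos_iff.2 hc
  set m := max ‖c‖ ‖c‖⁻¹ with hm
  have hm0 : 0 < m := lt_max_of_lt_left hc0
  have hmax1 : max 1 ‖c‖ ≤ m := by
    rcases le_total 1 ‖c‖ with h | h
    · rw [max_eq_right h]; exact le_max_left _ _
    · rw [max_eq_left h]
      exact le_max_of_le_right ((one_le_inv₀ hc0).2 h)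
  have hmax2 : max 1 ‖c‖ * max 1 ‖c‖ ≤ ‖c‖ * m := by
    rcases le_total 1 ‖c‖ with h | h
    · rw [max_eq_right h, hm, max_eq_left ((inv_le_one₀ hc0).2 h |>.trans h)]
    · rw [max_eq_left h, hm, max_eq_right (h.trans ((one_le_inv₀ hc0).2 h)), one_mul,
        mul_inv_cancel₀ hc0.ne']
  have hkey : ∀ a : ℂ, Real.sqrt (1 + ‖c * a‖ ^ 2) ≤ max 1 ‖c‖ * Real.sqrt (1 + ‖a‖ ^ 2) := by
    intro a
    rw [norm_mul, mul_pow]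
    exact sqrt_scale hc0.le (by positivity)
  induction x using OnePoint.rec with
  | infty =>
    induction y using OnePoint.rec with
    | infty => rw [smulS_i, sdist_ii]; simp
    | coe b =>
      rw [smulS_i, smulS_c, sdist_ic, sdist_ic]
      have h2 : (0:ℝ) < Real.sqrt (1 + ‖c * b‖ ^ 2) := Real.sqrt_pos.2 (by positivity)
      have h3 : (0:ℝ) < Real.sqrt (1 + ‖b‖ ^ 2) := Real.sqrt_pos.2 (by positivity)
      rw [mul_one_div, div_le_div_iff₀ h3 h2, one_mul]
      exact (hkey b).trans (mul_le_mul_of_nonneg_right hmax1 h3.le)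
  | coe a =>
    induction y using OnePoint.rec with
    | infty =>
      rw [smulS_i, smulS_c, sdist_ci, sdist_ci]
      have h2 : (0:ℝ) < Real.sqrt (1 + ‖c * a‖ ^ 2) := Real.sqrt_pos.2 (by positivity)
      have h3 : (0:ℝ) < Real.sqrt (1 + ‖a‖ ^ 2) := Real.sqrt_pos.2 (by positivity)
      rw [mul_one_div, div_le_div_iff₀ h3 h2, one_mul]
      exact (hkey a).trans (mul_le_mul_of_nonneg_right hmax1 h3.le)
    | coe b =>
      rw [smulS_c, smulS_c, sdist_cc, sdist_cc]
      have hA : (0:ℝ) < Real.sqrt (1 + ‖a‖ ^ 2) := Real.sqrt_pos.2 (by positivity)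
      have hB : (0:ℝ) < Real.sqrt (1 + ‖b‖ ^ 2) := Real.sqrt_pos.2 (by positivity)
      have hA' : (0:ℝ) < Real.sqrt (1 + ‖c * a‖ ^ 2) := Real.sqrt_pos.2 (by positivity)
      have hB' : (0:ℝ) < Real.sqrt (1 + ‖c * b‖ ^ 2) := Real.sqrt_pos.2 (by positivity)
      have hsub : c * a - c * b = c * (a - b) := by ring
      rw [hsub, norm_mul]
      have hrhs : m * (‖c‖ * ‖a - b‖ / (Real.sqrt (1 + ‖c * a‖ ^ 2) * Real.sqrt (1 + ‖c * b‖ ^ 2)))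
          = (m * ‖c‖ * ‖a - b‖) / (Real.sqrt (1 + ‖c * a‖ ^ 2) * Real.sqrt (1 + ‖c * b‖ ^ 2)) := by
        ring
      rw [hrhs, div_le_div_iff₀ (by positivity) (by positivity)]
      have step : Real.sqrt (1 + ‖c * a‖ ^ 2) * Real.sqrt (1 + ‖c * b‖ ^ 2) ≤
          (‖c‖ * m) * (Real.sqrt (1 + ‖a‖ ^ 2) * Real.sqrt (1 + ‖b‖ ^ 2)) := by
        calc Real.sqrt (1 + ‖c * a‖ ^ 2) * Real.sqrt (1 + ‖c * b‖ ^ 2)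
            ≤ (max 1 ‖c‖ * Real.sqrt (1 + ‖a‖ ^ 2)) * (max 1 ‖c‖ * Real.sqrt (1 + ‖b‖ ^ 2)) :=
              mul_le_mul (hkey a) (hkey b) hB'.le (by positivity)
          _ = (max 1 ‖c‖ * max 1 ‖c‖) * (Real.sqrt (1 + ‖a‖ ^ 2) * Real.sqrt (1 + ‖b‖ ^ 2)) := by
              ring
          _ ≤ (‖c‖ * m) * (Real.sqrt (1 + ‖a‖ ^ 2) * Real.sqrt (1 + ‖b‖ ^ 2)) :=
              mul_le_mul_of_nonneg_right hmax2 (by positivity)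
      calc ‖a - b‖ * (Real.sqrt (1 + ‖c * a‖ ^ 2) * Real.sqrt (1 + ‖c * b‖ ^ 2))
          ≤ ‖a - b‖ * ((‖c‖ * m) * (Real.sqrt (1 + ‖a‖ ^ 2) * Real.sqrt (1 + ‖b‖ ^ 2))) :=
            mul_le_mul_of_nonneg_left step (norm_nonneg _)
        _ = m * ‖c‖ * ‖a - b‖ * (Real.sqrt (1 + ‖a‖ ^ 2) * Real.sqrt (1 + ‖b‖ ^ 2)) := by ring


lemma coe_ne_infty (a : ℂ) : (a : OnePoint ℂ) ≠ ∞ := by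
  exact Option.some_ne_none a

lemma coe_inj {a b : ℂ} (h : (a : OnePoint ℂ) = b) : a = b := by
  exact Option.some_injective ℂ h

lemma tendsto_quot {f : ℂ → OnePoint ℂ} {z : ℂ} {g : ℂ → ℂ}
    (hg : DifferentiableAt ℂ g z) (hrep : ∀ᶠ w in 𝓝 z, f w = (g w : OnePoint ℂ)) :
    Tendsto (fun w => sdist (f w) (f z) / ‖w - z‖) (𝓝[≠] z)
      (𝓝 (‖deriv g z‖ / (1 + ‖g z‖ ^ 2))) := by
  have hz : f z = (g z : OnePoint ℂ) := hrep.self_of_nhds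
  have h1 : Tendsto (fun w => ‖slope g z w‖) (𝓝[≠] z) (𝓝 ‖deriv g z‖) :=
    (hasDerivAt_iff_tendsto_slope.1 hg.hasDerivAt).norm
  have hA : (0:ℝ) < 1 + ‖g z‖ ^ 2 := by positivity
  have h2 : Tendsto (fun w => (Real.sqrt (1 + ‖g w‖ ^ 2) * Real.sqrt (1 + ‖g z‖ ^ 2))⁻¹)
      (𝓝[≠] z) (𝓝 ((1 + ‖g z‖ ^ 2)⁻¹)) := by
    have hc : ContinuousAt (fun w => (Real.sqrt (1 + ‖g w‖ ^ 2) * Real.sqrt (1 + ‖g z‖ ^ 2))⁻¹) z := by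
      apply ContinuousAt.inv₀
      · exact ((Real.continuous_sqrt.continuousAt.comp
          ((continuousAt_const.add ((hg.continuousAt.norm).pow 2)))).mul continuousAt_const)
      · have : (0:ℝ) < Real.sqrt (1 + ‖g z‖ ^ 2) := Real.sqrt_pos.2 (by positivity)
        positivity
    have := hc.tendsto.mono_left (nhdsWithin_le_nhds (s := {z}ᶜ))
    rwa [Real.mul_self_sqrt hA.le] at this
  have key := h1.mul h2
  rw [← div_eq_mul_inv] at key
  apply key.congr'
  filter_upwards [hrep.filter_mono nhdsWithin_le_nhds] with w hw
  rw [hw, hz, sdist_cc, slope_def_field, norm_div]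
  simp only [div_eq_mul_inv, mul_inv]
  ring

lemma sphDeriv_rep {f : ℂ → OnePoint ℂ} (hm : MeromorphicSphereOn f Set.univ) (z : ℂ) :
    ∃ g : ℂ → ℂ, DifferentiableAt ℂ g z ∧
      sphDeriv f z = ‖deriv g z‖ / (1 + ‖g z‖ ^ 2) ∧
      Tendsto (fun w => sdist (f w) (f z) / ‖w - z‖) (𝓝[≠] z) (𝓝 (sphDeriv f z)) := by
  rcases hm z (Set.mem_univ z) with ⟨g, hg, hrep⟩ | ⟨g, hg, hrep⟩
  · have ht := tendsto_quot hg.differentiableAt hrep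
    exact ⟨g, hg.differentiableAt, ht.limUnder_eq, by
      unfold sphDeriv; rw [ht.limUnder_eq]; exact ht⟩
  · have hz : f z = sinv (g z : OnePoint ℂ) := hrep.self_of_nhds
    have ht0 := tendsto_quot (f := fun w => ((g w : ℂ) : OnePoint ℂ))
      hg.differentiableAt (Eventually.of_forall fun w => rfl)
    have ht : Tendsto (fun w => sdist (f w) (f z) / ‖w - z‖) (𝓝[≠] z)
        (𝓝 (‖deriv g z‖ / (1 + ‖g z‖ ^ 2))) := by
      apply ht0.congr'
      filter_upwards [hrep.filter_mono nhdsWithin_le_nhds] with w hw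
      rw [hw, hz, sdist_sinv]
    exact ⟨g, hg.differentiableAt, ht.limUnder_eq, by
      unfold sphDeriv; rw [ht.limUnder_eq]; exact ht⟩

lemma sphDeriv_nonneg {f : ℂ → OnePoint ℂ} (hm : MeromorphicSphereOn f Set.univ) (z : ℂ) :
    0 ≤ sphDeriv f z := by
  obtain ⟨g, _, heq, _⟩ := sphDeriv_rep hm z
  rw [heq]
  have : (0:ℝ) ≤ 1 + ‖g z‖ ^ 2 := by nlinarith [sq_nonneg ‖g z‖]
  exact div_nonneg (norm_nonneg _) this

lemma sphDeriv_le_of_rep {f : ℂ → OnePoint ℂ} {z : ℂ} {g : ℂ → ℂ}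
    (hg : DifferentiableAt ℂ g z) (hrep : ∀ᶠ w in 𝓝 z, f w = (g w : OnePoint ℂ)) :
    sphDeriv f z ≤ ‖deriv g z‖ := by
  unfold sphDeriv
  rw [(tendsto_quot hg hrep).limUnder_eq]
  have hA : (1:ℝ) ≤ 1 + ‖g z‖ ^ 2 := by nlinarith [sq_nonneg ‖g z‖]
  exact div_le_self (norm_nonneg _) hA

def toC : OnePoint ℂ → ℂ
  | ∞ => 0
  | (a : ℂ) => a

lemma toC_coe (a : ℂ) : toC (a : OnePoint ℂ) = a := rfl

lemma coe_toC {x : OnePoint ℂ} (hx : x ≠ ∞) : ((toC x : ℂ) : OnePoint ℂ) = x := by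
  induction x using OnePoint.rec with
  | infty => exact absurd rfl hx
  | coe a => rfl

lemma analyticAt_toC {f : ℂ → OnePoint ℂ} (hm : MeromorphicSphereOn f Set.univ) {z : ℂ}
    (hne : ∀ᶠ w in 𝓝 z, f w ≠ ∞) : AnalyticAt ℂ (fun w => toC (f w)) z := by
  rcases hm z (Set.mem_univ z) with ⟨g, hg, hrep⟩ | ⟨g, hg, hrep⟩
  · exact hg.congr (hrep.mono fun w hw => by show g w = toC (f w); rw [hw, toC_coe])
  · have hz : f z = sinv (g z : OnePoint ℂ) := hrep.self_of_nhds
    have hgz : g z ≠ 0 := by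
      intro h0
      exact hne.self_of_nhds (by rw [hz, h0]; exact sinv_zero)
    have hev : ∀ᶠ w in 𝓝 z, g w ≠ 0 := hg.continuousAt.eventually_ne hgz
    apply (hg.inv hgz).congr
    filter_upwards [hrep, hev] with w hw h0
    show (g w)⁻¹ = toC (f w)
    rw [hw, sinv_c h0, toC_coe]

lemma sdist_coe_le (a b : ℂ) : sdist (a : OnePoint ℂ) b ≤ ‖a - b‖ := by
  rw [sdist_cc]
  apply div_le_self (norm_nonneg _)
  have h1 : (1:ℝ) ≤ Real.sqrt (1 + ‖a‖ ^ 2) := by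
    have := Real.sqrt_le_sqrt (show (1:ℝ) ≤ 1 + ‖a‖ ^ 2 by nlinarith [sq_nonneg ‖a‖])
    rwa [Real.sqrt_one] at this
  have h2 : (1:ℝ) ≤ Real.sqrt (1 + ‖b‖ ^ 2) := by
    have := Real.sqrt_le_sqrt (show (1:ℝ) ≤ 1 + ‖b‖ ^ 2 by nlinarith [sq_nonneg ‖b‖])
    rwa [Real.sqrt_one] at this
  nlinarith

lemma tendsto_sdist_self {f : ℂ → OnePoint ℂ} (hm : MeromorphicSphereOn f Set.univ) (z : ℂ) :
    Tendsto (fun w => sdist (f w) (f z)) (𝓝 z) (𝓝 0) := by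
  have base : ∀ g : ℂ → ℂ, AnalyticAt ℂ g z → (∀ᶠ w in 𝓝 z, sdist (f w) (f z) = sdist ((g w : ℂ) : OnePoint ℂ) ((g z : ℂ) : OnePoint ℂ)) →
      Tendsto (fun w => sdist (f w) (f z)) (𝓝 z) (𝓝 0) := by
    intro g hg hev
    have hb : Tendsto (fun w => ‖g w - g z‖) (𝓝 z) (𝓝 0) := by
      have h0 : ContinuousAt (fun w => g w - g z) z := hg.continuousAt.sub continuousAt_const
      have h1 : ContinuousAt (fun w => ‖g w - g z‖) z := h0.norm
      simpa using h1.tendsto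
    apply squeeze_zero' ?_ ?_ hb
    · filter_upwards [hev] with w hw
      rw [hw]; rw [sdist_cc]; positivity
    · filter_upwards [hev] with w hw
      rw [hw]; exact sdist_coe_le _ _
  rcases hm z (Set.mem_univ z) with ⟨g, hg, hrep⟩ | ⟨g, hg, hrep⟩
  · have hz : f z = (g z : OnePoint ℂ) := hrep.self_of_nhds
    exact base g hg (hrep.mono fun w hw => by rw [hw, hz])
  · have hz : f z = sinv (g z : OnePoint ℂ) := hrep.self_of_nhds
    exact base g hg (hrep.mono fun w hw => by rw [hw, hz, sdist_sinv])

lemma merom_sinv {f : ℂ → OnePoint ℂ} (hm : MeromorphicSphereOn f Set.univ) :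
    MeromorphicSphereOn (fun w => sinv (f w)) Set.univ := by
  intro z _
  rcases hm z (Set.mem_univ z) with ⟨g, hg, hrep⟩ | ⟨g, hg, hrep⟩
  · exact Or.inr ⟨g, hg, hrep.mono fun w hw => by show sinv (f w) = _; rw [hw]⟩
  · exact Or.inl ⟨g, hg, hrep.mono fun w hw => by show sinv (f w) = _; rw [hw, sinv_sinv]⟩

lemma sphDeriv_sinv (f : ℂ → OnePoint ℂ) (z : ℂ) :
    sphDeriv (fun w => sinv (f w)) z = sphDeriv f z := by
  unfold sphDeriv
  congr 1
  funext w
  rw [sdist_sinv]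

lemma smulS_sinv {c : ℂ} (hc : c ≠ 0) (x : ℂ) :
    smulS c (sinv (x : OnePoint ℂ)) = sinv ((c⁻¹ * x : ℂ) : OnePoint ℂ) := by
  by_cases hx : x = 0
  · subst hx
    rw [sinv_zero, smulS_i, mul_zero, sinv_zero]
  · rw [sinv_c hx, smulS_c, sinv_c (mul_ne_zero (inv_ne_zero hc) hx), mul_inv, inv_inv]

lemma merom_rescale {f : ℂ → OnePoint ℂ} (hm : MeromorphicSphereOn f Set.univ)
    (α β : ℝ) {h : ℂ} (hh : h ≠ 0) :
    MeromorphicSphereOn (rescale f α β h) Set.univ := by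
  set c1 := h ^ (-α : ℂ) with hc1
  set c2 := h ^ (-β : ℂ) with hc2
  have hc1n : c1 ≠ 0 := by
    rw [hc1, Ne, Complex.cpow_eq_zero_iff]; tauto
  intro z _
  set a : ℂ → ℂ := fun w => h + c2 * w with ha
  have haa : AnalyticAt ℂ a z :=
    analyticAt_const.add (analyticAt_const.mul (analyticAt_id))
  have hac : ContinuousAt a z := haa.continuousAt
  rcases hm (a z) (Set.mem_univ _) with ⟨g, hg, hrep⟩ | ⟨g, hg, hrep⟩
  · left
    refine ⟨fun w => c1 * g (a w), analyticAt_const.mul (hg.comp haa), ?_⟩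
    filter_upwards [hac.tendsto.eventually hrep] with w hw
    show smulS c1 (f (a w)) = _
    rw [hw, smulS_c]
  · right
    refine ⟨fun w => c1⁻¹ * g (a w), analyticAt_const.mul (hg.comp haa), ?_⟩
    filter_upwards [hac.tendsto.eventually hrep] with w hw
    show smulS c1 (f (a w)) = _
    rw [hw, smulS_sinv hc1n]


lemma sdist_zero_infty : sdist ((0:ℂ) : OnePoint ℂ) ∞ = 1 := by
  rw [sdist_ci, norm_zero]
  norm_num

lemma core_bound (g : ℕ → ℂ → OnePoint ℂ) (hg : ∀ n, MeromorphicSphereOn (g n) Set.univ)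
    (ψ : ℂ → OnePoint ℂ) (N : ℕ)
    (hN : ∀ n, N ≤ n → ∀ z ∈ Metric.closedBall (0:ℂ) 1, sdist (g n z) (ψ z) < 1/16)
    (hbig : 1/2 ≤ sdist (g N 0) ∞) :
    ∃ B : ℝ, ∀ n, N ≤ n → sphDeriv (g n) 0 ≤ B := by
  -- choose δ
  have hts := tendsto_sdist_self (hg N) 0
  have h8 : ∀ᶠ w in 𝓝 (0:ℂ), sdist (g N w) (g N 0) < 1/16 :=
    hts.eventually (gt_mem_nhds (by norm_num : (0:ℝ) < 1/16))
  rw [Metric.eventually_nhds_iff] at h8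
  obtain ⟨δ₀, hδ₀, hδprop⟩ := h8
  set δ := min δ₀ 1 with hδdef
  have hδ : 0 < δ := lt_min hδ₀ one_pos
  have hδ1 : δ ≤ 1 := min_le_right _ _
  -- for n ≥ N and z in the ball, g n z is 1/4 away from ∞
  have key : ∀ n, N ≤ n → ∀ z ∈ Metric.ball (0:ℂ) δ, (1:ℝ)/4 ≤ sdist (g n z) ∞ := by
    intro n hn z hz
    have hzK : z ∈ Metric.closedBall (0:ℂ) 1 :=
      Metric.closedBall_subset_closedBall hδ1 (Metric.ball_subset_closedBall hz)
    have t1 := hN n hn z hzK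
    have t2 := hN N le_rfl z hzK
    have t3 : sdist (g N z) (g N 0) < 1/16 :=
      hδprop (lt_of_lt_of_le (Metric.mem_ball.1 hz) (min_le_left _ _))
    have T1 : sdist (g N 0) ∞ ≤ sdist (g N 0) (g N z) + sdist (g N z) ∞ := sdist_triangle _ _ _
    have T2 : sdist (g N z) ∞ ≤ sdist (g N z) (ψ z) + sdist (ψ z) ∞ := sdist_triangle _ _ _
    have T3 : sdist (ψ z) ∞ ≤ sdist (ψ z) (g n z) + sdist (g n z) ∞ := sdist_triangle _ _ _
    have c1 : sdist (g N 0) (g N z) = sdist (g N z) (g N 0) := sdist_comm _ _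
    have c2 : sdist (ψ z) (g n z) = sdist (g n z) (ψ z) := sdist_comm _ _
    linarith
  -- hence g n z is finite with norm ≤ 4 on the ball
  have fin : ∀ n, N ≤ n → ∀ z ∈ Metric.ball (0:ℂ) δ, g n z ≠ ∞ ∧ ‖toC (g n z)‖ ≤ 4 := by
    intro n hn z hz
    have hk := key n hn z hz
    have hne : g n z ≠ ∞ := by
      intro h
      rw [h, sdist_ii] at hk
      norm_num at hk
    refine ⟨hne, ?_⟩
    set a := toC (g n z) with hadef
    have : g n z = (a : OnePoint ℂ) := (coe_toC hne).symm
    rw [this, sdist_ci] at hk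
    have hs : (0:ℝ) < Real.sqrt (1 + ‖a‖ ^ 2) := Real.sqrt_pos.2 (by positivity)
    have h4 : Real.sqrt (1 + ‖a‖ ^ 2) ≤ 4 := by
      rw [div_le_div_iff₀ (by norm_num) hs] at hk
      linarith
    have h16 : 1 + ‖a‖ ^ 2 ≤ 16 := by
      have := Real.sq_sqrt (by positivity : (0:ℝ) ≤ 1 + ‖a‖ ^ 2)
      nlinarith
    nlinarith [norm_nonneg a]
  refine ⟨9 / δ, fun n hn => ?_⟩
  set F : ℂ → ℂ := fun w => toC (g n w) with hF
  have hballmem : Metric.ball (0:ℂ) δ ∈ 𝓝 (0:ℂ) := Metric.ball_mem_nhds _ hδ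
  have hnean : ∀ w ∈ Metric.ball (0:ℂ) δ, AnalyticAt ℂ F w := by
    intro w hw
    apply analyticAt_toC (hg n)
    filter_upwards [Metric.isOpen_ball.mem_nhds hw] with u hu
    exact (fin n hn u hu).1
  have hdiff : DifferentiableOn ℂ F (Metric.ball (0:ℂ) δ) :=
    fun w hw => ((hnean w hw).differentiableAt).differentiableWithinAt
  have hmaps : Set.MapsTo F (Metric.ball (0:ℂ) δ) (Metric.ball (F 0) 9) := by
    intro z hz
    have h1 := (fin n hn z hz).2
    have h2 := (fin n hn 0 (Metric.mem_ball_self hδ)).2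
    rw [Metric.mem_ball]
    calc dist (F z) (F 0) ≤ ‖F z‖ + ‖F 0‖ := dist_le_norm_add_norm _ _
      _ ≤ 4 + 4 := add_le_add h1 h2
      _ < 9 := by norm_num
  have hschwarz := Complex.norm_deriv_le_div_of_mapsTo_ball hdiff (hmaps.mono_right Metric.ball_subset_closedBall) hδ
  have hrep : ∀ᶠ w in 𝓝 (0:ℂ), g n w = (F w : OnePoint ℂ) := by
    filter_upwards [hballmem] with w hw
    exact (coe_toC (fin n hn w hw).1).symm
  exact (sphDeriv_le_of_rep ((hnean 0 (Metric.mem_ball_self hδ)).differentiableAt) hrep).trans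
    hschwarz

lemma bound_of_conv (G : ℕ → ℂ → OnePoint ℂ) (hG : ∀ n, MeromorphicSphereOn (G n) Set.univ)
    (φ : ℂ → OnePoint ℂ) (hconv : SphConvOn G φ Set.univ) :
    ∃ B : ℝ, ∃ N : ℕ, ∀ n, N ≤ n → sphDeriv (G n) 0 ≤ B := by
  have hev := hconv (Metric.closedBall (0:ℂ) 1) (Set.subset_univ _)
    (isCompact_closedBall _ _) (1/16) (by norm_num)
  rw [eventually_atTop] at hev
  obtain ⟨N, hN⟩ := hev
  by_cases hcase : 1/2 ≤ sdist (G N 0) ∞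
  · obtain ⟨B, hB⟩ := core_bound G hG φ N (fun n hn => hN n hn) hcase
    exact ⟨B, N, hB⟩
  · push_neg at hcase
    have hbig : 1/2 ≤ sdist (sinv (G N 0)) ∞ := by
      have T : sdist ((0:ℂ) : OnePoint ℂ) ∞ ≤ sdist ((0:ℂ) : OnePoint ℂ) (G N 0) + sdist (G N 0) ∞ :=
        sdist_triangle _ _ _
      rw [sdist_zero_infty] at T
      have e1 : sdist (sinv (G N 0)) ∞ = sdist (G N 0) ((0:ℂ) : OnePoint ℂ) := by
        rw [show (∞ : OnePoint ℂ) = sinv ((0:ℂ) : OnePoint ℂ) from sinv_zero.symm, sdist_sinv]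
      rw [e1, sdist_comm]
      linarith
    have hN' : ∀ n, N ≤ n → ∀ z ∈ Metric.closedBall (0:ℂ) 1,
        sdist (sinv (G n z)) (sinv (φ z)) < 1/16 := by
      intro n hn z hz
      rw [sdist_sinv]
      exact hN n hn z hz
    obtain ⟨B, hB⟩ := core_bound (fun n w => sinv (G n w)) (fun n => merom_sinv (hG n))
      (fun w => sinv (φ w)) N hN' hbig
    refine ⟨B, N, fun n hn => ?_⟩
    have := hB n hn
    rwa [sphDeriv_sinv] at this


lemma uniform_bound (f : ℂ → OnePoint ℂ) (α β : ℝ) (hm : MeromorphicSphereOn f Set.univ)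
    (hnormal : NormalOn (YFamily f α β) Set.univ) :
    ∃ M : ℝ, ∀ h : ℂ, 1 ≤ ‖h‖ → sphDeriv (rescale f α β h) 0 ≤ M := by
  by_contra hcon
  push_neg at hcon
  have hsel : ∀ n : ℕ, ∃ h : ℂ, 1 ≤ ‖h‖ ∧ (n : ℝ) < sphDeriv (rescale f α β h) 0 := by
    intro n
    obtain ⟨h, h1, h2⟩ := hcon n
    exact ⟨h, h1, h2⟩
  choose hseq h1 h2 using hsel
  set F : ℕ → ℂ → OnePoint ℂ := fun n => rescale f α β (hseq n) with hFdef
  obtain ⟨σ, hσ, φ, hφ⟩ := hnormal F (fun n => ⟨hseq n, h1 n, rfl⟩)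
  have hnz : ∀ n, hseq n ≠ 0 := by
    intro n hn
    have := h1 n
    rw [hn, norm_zero] at this
    linarith
  obtain ⟨B, N, hB⟩ := bound_of_conv (fun n => F (σ n))
    (fun n => merom_rescale hm α β (hnz (σ n))) φ hφ
  set n := max N (⌈B⌉₊ + 1) with hndef
  have l1 : sphDeriv (F (σ n)) 0 ≤ B := hB n (le_max_left _ _)
  have l2 : ((σ n : ℕ) : ℝ) < sphDeriv (F (σ n)) 0 := h2 (σ n)
  have l3 : (n : ℝ) ≤ (σ n : ℝ) := Nat.cast_le.2 hσ.le_apply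
  have l4 : ((⌈B⌉₊ + 1 : ℕ) : ℝ) ≤ (n : ℝ) := Nat.cast_le.2 (le_max_right _ _)
  have l5 : B ≤ (⌈B⌉₊ : ℝ) := Nat.le_ceil B
  push_cast at l4
  linarith

lemma rescale_bound {f : ℂ → OnePoint ℂ} (hm : MeromorphicSphereOn f Set.univ)
    (α β : ℝ) (h : ℂ) (hh1 : 1 ≤ ‖h‖) :
    sphDeriv f h ≤ ‖h‖ ^ (|α| + β) * sphDeriv (rescale f α β h) 0 := by
  have hh0 : h ≠ 0 := by
    intro e; rw [e, norm_zero] at hh1; linarith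
  have ht0 : (0:ℝ) < ‖h‖ := lt_of_lt_of_le one_pos hh1
  set c1 : ℂ := h ^ (-α : ℂ) with hc1def
  set c2 : ℂ := h ^ (-β : ℂ) with hc2def
  have hc1 : ‖c1‖ = ‖h‖ ^ (-α) := by
    rw [hc1def, show (-α : ℂ) = ((-α : ℝ) : ℂ) by push_cast; ring]
    exact Complex.norm_cpow_real h (-α)
  have hc2 : ‖c2‖ = ‖h‖ ^ (-β) := by
    rw [hc2def, show (-β : ℂ) = ((-β : ℝ) : ℂ) by push_cast; ring]
    exact Complex.norm_cpow_real h (-β)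
  have hc1n : c1 ≠ 0 := by
    rw [hc1def, Ne, Complex.cpow_eq_zero_iff]; tauto
  have hc2n : c2 ≠ 0 := by
    rw [hc2def, Ne, Complex.cpow_eq_zero_iff]; tauto
  have hmval : max ‖c1‖ ‖c1‖⁻¹ = ‖h‖ ^ |α| := by
    rw [hc1, ← Real.rpow_neg ht0.le, neg_neg]
    rcases le_total 0 α with hα | hα
    · rw [_root_.abs_of_nonneg hα,
        max_eq_right (Real.rpow_le_rpow_of_exponent_le hh1 (by linarith))]
    · rw [_root_.abs_of_nonpos hα,
        max_eq_left (Real.rpow_le_rpow_of_exponent_le hh1 (by linarith))]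
  obtain ⟨gf, hgf, heqf, htf⟩ := sphDeriv_rep hm h
  obtain ⟨gr, hgr, heqr, htr⟩ := sphDeriv_rep (merom_rescale hm α β hh0) 0
  set ψ : ℂ → ℂ := fun w => c2⁻¹ * (w - h) with hψdef
  have hψ : Tendsto ψ (𝓝[≠] h) (𝓝[≠] (0:ℂ)) := by
    rw [tendsto_nhdsWithin_iff]
    constructor
    · have hcont : Continuous ψ := continuous_const.mul (continuous_id.sub continuous_const)
      have := (hcont.tendsto h).mono_left (nhdsWithin_le_nhds (s := {h}ᶜ))
      simpa [hψdef] using this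
    · filter_upwards [self_mem_nhdsWithin] with w hw
      exact mul_ne_zero (inv_ne_zero hc2n) (sub_ne_zero.2 hw)
  have comp : Tendsto (fun w => ‖h‖ ^ (|α| + β) *
      (sdist (rescale f α β h (ψ w)) (rescale f α β h 0) / ‖ψ w - 0‖)) (𝓝[≠] h)
      (𝓝 (‖h‖ ^ (|α| + β) * sphDeriv (rescale f α β h) 0)) :=
    (htr.comp hψ).const_mul _
  apply le_of_tendsto_of_tendsto htf comp
  filter_upwards [self_mem_nhdsWithin] with w hw
  have hwh : w ≠ h := hw
  have hw0 : (0:ℝ) < ‖w - h‖ := norm_pos_iff.2 (sub_ne_zero.2 hwh)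
  have hRψ : rescale f α β h (ψ w) = smulS c1 (f w) := by
    show smulS c1 (f (h + c2 * (c2⁻¹ * (w - h)))) = smulS c1 (f w)
    rw [show h + c2 * (c2⁻¹ * (w - h)) = w by field_simp; ring]
  have hR0 : rescale f α β h 0 = smulS c1 (f h) := by
    show smulS c1 (f (h + c2 * 0)) = smulS c1 (f h)
    rw [mul_zero, add_zero]
  have hnψ : ‖ψ w - 0‖ = ‖h‖ ^ (β : ℝ) * ‖w - h‖ := by
    rw [sub_zero]
    show ‖c2⁻¹ * (w - h)‖ = _
    rw [norm_mul, norm_inv, hc2, Real.rpow_neg ht0.le, inv_inv]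
  show sdist (f w) (f h) / ‖w - h‖ ≤ _
  rw [hRψ, hR0, hnψ]
  have hdist := sdist_smul_le c1 hc1n (f w) (f h)
  rw [hmval] at hdist
  have e1 : (0:ℝ) < ‖h‖ ^ (β : ℝ) := Real.rpow_pos_of_pos ht0 β
  have hrw : ‖h‖ ^ (|α| + β) * (sdist (smulS c1 (f w)) (smulS c1 (f h)) / (‖h‖ ^ (β:ℝ) * ‖w - h‖))
      = (‖h‖ ^ |α| * sdist (smulS c1 (f w)) (smulS c1 (f h))) / ‖w - h‖ := by
    have cancel : ‖h‖ ^ (β:ℝ) * (sdist (smulS c1 (f w)) (smulS c1 (f h)) / (‖h‖ ^ (β:ℝ) * ‖w - h‖))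
        = sdist (smulS c1 (f w)) (smulS c1 (f h)) / ‖w - h‖ := by
      rw [mul_div_assoc']
      exact mul_div_mul_left _ _ e1.ne'
    rw [Real.rpow_add ht0, mul_assoc, cancel, mul_div_assoc]
  rw [hrw]
  exact (div_le_div_iff_of_pos_right hw0).2 hdist


/-- If the rescaling family of a transcendental meromorphic `f` is normal in `ℂ`
(`α ∈ ℝ`, `β > -1`), then `f^#(z) = O(|z|^{|α|+β})` as `z → ∞`. -/
theorem stmt_0 (f : ℂ → OnePoint ℂ) (α β : ℝ) (hβ : -1 < β)
    (hmer : MeromorphicSphereOn f Set.univ) (htrans : ¬ IsRat f)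
    (hnormal : NormalOn (YFamily f α β) Set.univ) :
    ∃ C R : ℝ, 0 < C ∧ ∀ z : ℂ, R ≤ ‖z‖ → sphDeriv f z ≤ C * ‖z‖ ^ (|α| + β) := by
  obtain ⟨M, hM⟩ := uniform_bound f α β hmer hnormal
  refine ⟨max M 1, 1, lt_of_lt_of_le one_pos (le_max_right _ _), fun z hz => ?_⟩
  have h1 := rescale_bound hmer α β z hz
  have h2 : sphDeriv (rescale f α β z) 0 ≤ max M 1 := le_trans (hM z hz) (le_max_left _ _)
  have h3 : (0:ℝ) ≤ ‖z‖ ^ (|α| + β) := Real.rpow_nonneg (norm_nonneg _) _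
  calc sphDeriv f z ≤ ‖z‖ ^ (|α| + β) * sphDeriv (rescale f α β z) 0 := h1
    _ ≤ ‖z‖ ^ (|α| + β) * max M 1 := mul_le_mul_of_nonneg_left h2 h3
    _ = max M 1 * ‖z‖ ^ (|α| + β) := mul_comm _ _

end
end

section
/- Every function f ∈ Y_{α,β} has infinitely many zeros and infinitely many poles. -/
open Complex Filter Set Topology OnePoint

noncomputable section
attribute [local instance] Classical.propDecidable

end

noncomputable section
attribute [local instance] Classical.propDecidable


namespace Stmt6

/-- Extract the finite value of a point of the sphere (`∞ ↦ 0`). -/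
def extract : OnePoint ℂ → ℂ
  | ∞ => 0
  | (a : ℂ) => a

@[simp] lemma extract_coe (a : ℂ) : extract (a : OnePoint ℂ) = a := rfl
@[simp] lemma extract_infty : extract ∞ = 0 := rfl

@[simp] lemma sdist_coe_coe (a b : ℂ) :
    sdist (a : OnePoint ℂ) (b : OnePoint ℂ)
      = ‖a - b‖ / (Real.sqrt (1 + ‖a‖ ^ 2) * Real.sqrt (1 + ‖b‖ ^ 2)) := rfl

@[simp] lemma sdist_coe_infty (a : ℂ) :
    sdist (a : OnePoint ℂ) ∞ = 1 / Real.sqrt (1 + ‖a‖ ^ 2) := rfl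

@[simp] lemma sdist_infty_coe (b : ℂ) :
    sdist ∞ (b : OnePoint ℂ) = 1 / Real.sqrt (1 + ‖b‖ ^ 2) := rfl

@[simp] lemma sdist_infty_infty : sdist (∞ : OnePoint ℂ) ∞ = 0 := rfl

lemma sq1_pos (a : ℂ) : 0 < Real.sqrt (1 + ‖a‖ ^ 2) := by
  apply Real.sqrt_pos.2; positivity

lemma sq1_sq (a : ℂ) : Real.sqrt (1 + ‖a‖ ^ 2) ^ 2 = 1 + ‖a‖ ^ 2 :=
  Real.sq_sqrt (by positivity)

lemma sq1_ge_one (a : ℂ) : 1 ≤ Real.sqrt (1 + ‖a‖ ^ 2) := by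
  nlinarith [sq1_sq a, Real.sqrt_nonneg (1 + ‖a‖ ^ 2), sq_nonneg ‖a‖]

lemma sq1_ge_norm (a : ℂ) : ‖a‖ ≤ Real.sqrt (1 + ‖a‖ ^ 2) := by
  nlinarith [sq1_sq a, Real.sqrt_nonneg (1 + ‖a‖ ^ 2), norm_nonneg a]

lemma sq1_le (a : ℂ) : Real.sqrt (1 + ‖a‖ ^ 2) ≤ 1 + ‖a‖ := by
  nlinarith [sq1_sq a, Real.sqrt_nonneg (1 + ‖a‖ ^ 2), norm_nonneg a]

lemma sdist_nonneg : ∀ x y : OnePoint ℂ, 0 ≤ sdist x y := by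
  intro x y
  induction x using OnePoint.rec <;> induction y using OnePoint.rec <;>
    simp <;> positivity

lemma sdist_self : ∀ x : OnePoint ℂ, sdist x x = 0 := by
  intro x; induction x using OnePoint.rec <;> simp

lemma sdist_comm : ∀ x y : OnePoint ℂ, sdist x y = sdist y x := by
  intro x y
  induction x using OnePoint.rec <;> induction y using OnePoint.rec <;>
    simp [norm_sub_rev, mul_comm]

lemma sdist_eq_zero_iff {x y : OnePoint ℂ} : sdist x y = 0 ↔ x = y := by
  constructor
  · induction x using OnePoint.rec <;> induction y using OnePoint.rec <;> intro h
    · rfl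
    · exfalso; rename_i b; rw [sdist_infty_coe, div_eq_zero_iff] at h
      have := sq1_pos b
      rcases h with h | h <;> linarith
    · exfalso; rename_i a; rw [sdist_coe_infty, div_eq_zero_iff] at h
      have := sq1_pos a
      rcases h with h | h <;> linarith
    · rename_i a b; rw [sdist_coe_coe, div_eq_zero_iff] at h
      rcases h with h | h
      · rw [norm_eq_zero, sub_eq_zero] at h; exact congrArg _ h
      · exfalso; nlinarith [sq1_pos a, sq1_pos b]
  · rintro rfl; exact sdist_self x

lemma sdist_pos_of_ne {x y : OnePoint ℂ} (h : x ≠ y) : 0 < sdist x y :=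
  lt_of_le_of_ne (sdist_nonneg x y) (fun hc => h (sdist_eq_zero_iff.1 hc.symm))

end Stmt6

namespace Stmt6

lemma le_of_sq_le_sq {x y : ℝ} (hy : 0 ≤ y) (h : x^2 ≤ y^2) (hx : 0 ≤ x) : x ≤ y := by
  nlinarith

lemma norm_one_add_mul_conj_le (b c : ℂ) :
    ‖1 + b * (starRingEnd ℂ) c‖ ≤ Real.sqrt (1 + ‖b‖ ^ 2) * Real.sqrt (1 + ‖c‖ ^ 2) := by
  have h1 : ‖1 + b * (starRingEnd ℂ) c‖ ≤ 1 + ‖b‖ * ‖c‖ := by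
    calc ‖1 + b * (starRingEnd ℂ) c‖ ≤ ‖(1:ℂ)‖ + ‖b * (starRingEnd ℂ) c‖ := norm_add_le _ _
    _ = 1 + ‖b‖ * ‖c‖ := by rw [norm_one, norm_mul, RCLike.norm_conj]
  refine h1.trans (le_of_sq_le_sq (by positivity) ?_ (by positivity))
  rw [mul_pow, sq1_sq, sq1_sq]
  nlinarith [sq_nonneg (‖b‖ - ‖c‖), norm_nonneg b, norm_nonneg c]

lemma one_add_mul_conj_self (c : ℂ) :
    ‖1 + c * (starRingEnd ℂ) c‖ = 1 + ‖c‖ ^ 2 := by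
  rw [Complex.mul_conj]
  have h : (1 : ℂ) + (Complex.normSq c : ℂ) = ((1 + ‖c‖^2 : ℝ) : ℂ) := by
    push_cast [Complex.normSq_eq_norm_sq]; ring
  rw [h, Complex.norm_real, Real.norm_of_nonneg (by positivity)]

/-- Central inequality for the chordal triangle inequality, all points finite. -/
lemma sdist_triangle_key (a b c : ℂ) :
    ‖a - b‖ * Real.sqrt (1 + ‖c‖ ^ 2) ^ 2 ≤
      ‖a - c‖ * (Real.sqrt (1 + ‖b‖ ^ 2) * Real.sqrt (1 + ‖c‖ ^ 2)) +
      ‖c - b‖ * (Real.sqrt (1 + ‖a‖ ^ 2) * Real.sqrt (1 + ‖c‖ ^ 2)) := by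
  have hid : (a - b) * (1 + c * (starRingEnd ℂ) c)
      = (a - c) * (1 + b * (starRingEnd ℂ) c) + (c - b) * (1 + a * (starRingEnd ℂ) c) := by
    ring
  calc ‖a - b‖ * Real.sqrt (1 + ‖c‖ ^ 2) ^ 2
      = ‖(a - b) * (1 + c * (starRingEnd ℂ) c)‖ := by
        rw [norm_mul, one_add_mul_conj_self, sq1_sq]
    _ = ‖(a - c) * (1 + b * (starRingEnd ℂ) c) + (c - b) * (1 + a * (starRingEnd ℂ) c)‖ := by
        rw [hid]
    _ ≤ ‖(a - c) * (1 + b * (starRingEnd ℂ) c)‖ + ‖(c - b) * (1 + a * (starRingEnd ℂ) c)‖ :=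
        norm_add_le _ _
    _ ≤ _ := by
        rw [norm_mul, norm_mul]
        gcongr
        · exact norm_one_add_mul_conj_le b c
        · exact norm_one_add_mul_conj_le a c

lemma sqrt_le_add (a c : ℂ) :
    Real.sqrt (1 + ‖c‖ ^ 2) ≤ ‖a - c‖ + Real.sqrt (1 + ‖a‖ ^ 2) := by
  have h1 : ‖c‖ ≤ ‖a‖ + ‖a - c‖ := by
    calc ‖c‖ = ‖a - (a - c)‖ := by rw [sub_sub_cancel]
    _ ≤ ‖a‖ + ‖a - c‖ := norm_sub_le _ _
  refine le_of_sq_le_sq (by positivity) ?_ (Real.sqrt_nonneg _)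
  rw [sq1_sq]
  nlinarith [sq1_sq a, sq1_ge_norm a, norm_nonneg (a - c), norm_nonneg a, norm_nonneg c,
    Real.sqrt_nonneg (1 + ‖a‖ ^ 2)]

lemma sdist_triangle : ∀ x y z : OnePoint ℂ, sdist x y ≤ sdist x z + sdist z y := by
  intro x y z
  induction x using OnePoint.rec <;> induction y using OnePoint.rec <;>
    induction z using OnePoint.rec
  · simp
  · simp; try positivity
  · simp; try positivity
  · -- x = ∞, y = b, z = c
    rename_i b c
    rw [sdist_infty_coe, sdist_infty_coe, sdist_coe_coe]
    have hB := sq1_pos b; have hC := sq1_pos c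
    rw [div_add_div _ _ (ne_of_gt hC) (ne_of_gt (mul_pos hC hB)), div_le_div_iff₀ hB
      (mul_pos hC (mul_pos hC hB))]
    have key : Real.sqrt (1 + ‖c‖ ^ 2) ≤ ‖c - b‖ + Real.sqrt (1 + ‖b‖ ^ 2) := by
      rw [norm_sub_rev]; exact sqrt_le_add b c
    nlinarith [mul_le_mul_of_nonneg_left key (le_of_lt (mul_pos hC hB)),
      norm_nonneg (c - b), mul_pos hC hB]
  · simp; try positivity
  · -- x = a, y = ∞, z = c
    rename_i a c
    rw [sdist_coe_infty, sdist_coe_coe, sdist_coe_infty]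
    have hA := sq1_pos a; have hC := sq1_pos c
    rw [div_add_div _ _ (ne_of_gt (mul_pos hA hC)) (ne_of_gt hC), div_le_div_iff₀ hA
      (mul_pos (mul_pos hA hC) hC)]
    have key := sqrt_le_add a c
    nlinarith [mul_le_mul_of_nonneg_left key (le_of_lt (mul_pos hA hC)),
      norm_nonneg (a - c), mul_pos hA hC]
  · -- x = a, y = b, z = ∞
    rename_i a b
    rw [sdist_coe_coe, sdist_coe_infty, sdist_infty_coe]
    have hA := sq1_pos a; have hB := sq1_pos b
    rw [div_add_div _ _ (ne_of_gt hA) (ne_of_gt hB), div_le_div_iff₀ (mul_pos hA hB)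
      (mul_pos hA hB)]
    have h1 : ‖a - b‖ ≤ Real.sqrt (1 + ‖a‖ ^ 2) + Real.sqrt (1 + ‖b‖ ^ 2) := by
      calc ‖a - b‖ ≤ ‖a‖ + ‖b‖ := norm_sub_le _ _
      _ ≤ _ := add_le_add (sq1_ge_norm a) (sq1_ge_norm b)
    nlinarith [mul_le_mul_of_nonneg_right h1 (le_of_lt (mul_pos hA hB)), mul_pos hA hB]
  · -- x = a, y = b, z = c : the main case
    rename_i a b c
    rw [sdist_coe_coe, sdist_coe_coe, sdist_coe_coe]
    have hA := sq1_pos a; have hB := sq1_pos b; have hC := sq1_pos c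
    rw [div_add_div _ _ (ne_of_gt (mul_pos hA hC)) (ne_of_gt (mul_pos hC hB)),
      div_le_div_iff₀ (mul_pos hA hB) (mul_pos (mul_pos hA hC) (mul_pos hC hB))]
    have key := sdist_triangle_key a b c
    nlinarith [mul_le_mul_of_nonneg_left key (le_of_lt (mul_pos hA hB)),
      mul_pos hA hB, mul_pos hA hC, mul_pos hC hB, norm_nonneg (a - b),
      norm_nonneg (a - c), norm_nonneg (c - b)]

end Stmt6

namespace Stmt6

/-! ### Conversions between `sdist` and norms -/

lemma sdist_coe_le_norm (a b : ℂ) : sdist (a : OnePoint ℂ) (b : OnePoint ℂ) ≤ ‖a - b‖ := by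
  rw [sdist_coe_coe]
  apply div_le_self (norm_nonneg _)
  have := sq1_ge_one a; have := sq1_ge_one b
  nlinarith

lemma norm_sub_eq_sdist (a b : ℂ) :
    ‖a - b‖ = sdist (a : OnePoint ℂ) (b : OnePoint ℂ)
      * (Real.sqrt (1 + ‖a‖ ^ 2) * Real.sqrt (1 + ‖b‖ ^ 2)) := by
  rw [sdist_coe_coe, div_mul_cancel₀]
  exact ne_of_gt (mul_pos (sq1_pos a) (sq1_pos b))

lemma norm_sub_le_of_sdist {a b : ℂ} {M : ℝ} (ha : ‖a‖ ≤ M) (hb : ‖b‖ ≤ M) :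
    ‖a - b‖ ≤ sdist (a : OnePoint ℂ) (b : OnePoint ℂ) * (1 + M) ^ 2 := by
  rw [norm_sub_eq_sdist a b]
  have h0 : (0:ℝ) ≤ M := le_trans (norm_nonneg a) ha
  apply mul_le_mul_of_nonneg_left _ (sdist_nonneg _ _)
  calc Real.sqrt (1 + ‖a‖ ^ 2) * Real.sqrt (1 + ‖b‖ ^ 2) ≤ (1 + ‖a‖) * (1 + ‖b‖) := by
        apply mul_le_mul (sq1_le a) (sq1_le b) (Real.sqrt_nonneg _) (by positivity)
  _ ≤ (1 + M) ^ 2 := by nlinarith [norm_nonneg a, norm_nonneg b]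

lemma sdist_infty_le_inv_norm {a : ℂ} (ha : a ≠ 0) :
    sdist (a : OnePoint ℂ) ∞ ≤ ‖a‖⁻¹ := by
  rw [sdist_coe_infty, one_div]
  exact inv_anti₀ (norm_pos_iff.2 ha) (sq1_ge_norm a)

lemma norm_le_of_sdist_infty {a : ℂ} {δ : ℝ} (hδ : 0 < δ)
    (h : δ ≤ sdist (a : OnePoint ℂ) ∞) : ‖a‖ ≤ δ⁻¹ := by
  rw [sdist_coe_infty] at h
  have h1 : Real.sqrt (1 + ‖a‖ ^ 2) ≤ δ⁻¹ := by
    rw [le_div_iff₀ (sq1_pos a)] at h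
    calc Real.sqrt (1 + ‖a‖ ^ 2) = δ⁻¹ * (δ * Real.sqrt (1 + ‖a‖ ^ 2)) := by
          field_simp
    _ ≤ δ⁻¹ * 1 := by
          apply mul_le_mul_of_nonneg_left _ (by positivity)
          linarith [mul_comm δ (Real.sqrt (1 + ‖a‖ ^ 2))]
    _ = δ⁻¹ := mul_one _
  exact le_trans (sq1_ge_norm a) h1

lemma sdist_infty_lt_of_norm {a : ℂ} {N : ℝ} (hN : 0 < N) (h : N < ‖a‖) :
    sdist (a : OnePoint ℂ) ∞ < N⁻¹ := by
  rw [sdist_coe_infty, one_div]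
  apply inv_strictAnti₀ hN
  exact lt_of_lt_of_le h (sq1_ge_norm a)

/-! ### `sinv` -/

@[simp] lemma sinv_infty : sinv ∞ = ((0:ℂ) : OnePoint ℂ) := rfl

lemma sinv_coe_of_ne {a : ℂ} (ha : a ≠ 0) : sinv (a : OnePoint ℂ) = ((a⁻¹ : ℂ) : OnePoint ℂ) := by
  simp [sinv, ha]

@[simp] lemma sinv_coe_zero : sinv ((0:ℂ) : OnePoint ℂ) = ∞ := by simp [sinv]

lemma sinv_sinv : ∀ x : OnePoint ℂ, sinv (sinv x) = x := by
  intro x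
  induction x using OnePoint.rec
  · simp
  · rename_i a
    by_cases ha : a = 0
    · subst ha; simp
    · rw [sinv_coe_of_ne ha, sinv_coe_of_ne (inv_ne_zero ha), inv_inv]

lemma sinv_eq_infty_iff {x : OnePoint ℂ} : sinv x = ∞ ↔ x = ((0:ℂ) : OnePoint ℂ) := by
  induction x using OnePoint.rec
  · simp
  · rename_i a
    by_cases ha : a = 0
    · subst ha; simp
    · rw [sinv_coe_of_ne ha]
      simp [OnePoint.coe_eq_coe, ha]

lemma sinv_eq_zero_iff {x : OnePoint ℂ} : sinv x = ((0:ℂ) : OnePoint ℂ) ↔ x = ∞ := by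
  constructor
  · intro h
    have := congrArg sinv h
    rwa [sinv_sinv, sinv_coe_zero] at this
  · rintro rfl; simp

lemma sq1_inv {a : ℂ} (ha : a ≠ 0) :
    Real.sqrt (1 + ‖a⁻¹‖ ^ 2) = Real.sqrt (1 + ‖a‖ ^ 2) / ‖a‖ := by
  have hn : (0:ℝ) < ‖a‖ := norm_pos_iff.2 ha
  have h2 : ‖a‖^2 ≠ 0 := by positivity
  rw [show (1:ℝ) + ‖a⁻¹‖ ^ 2 = (1 + ‖a‖^2) / ‖a‖^2 by
    rw [norm_inv, inv_pow, eq_div_iff h2, add_mul, one_mul, inv_mul_cancel₀ h2]; ring]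
  rw [Real.sqrt_div (by positivity), Real.sqrt_sq (norm_nonneg a)]

/-- `sinv` is an isometry for the chordal distance. -/
lemma sdist_sinv : ∀ x y : OnePoint ℂ, sdist (sinv x) (sinv y) = sdist x y := by
  have hcore : ∀ a : ℂ, a ≠ 0 → sdist ((a⁻¹ : ℂ) : OnePoint ℂ) ∞ = sdist ((a:ℂ) : OnePoint ℂ) ((0:ℂ) : OnePoint ℂ) := by
    intro a ha
    have hn : (0:ℝ) < ‖a‖ := norm_pos_iff.2 ha
    rw [sdist_coe_infty, sdist_coe_coe, sq1_inv ha, sub_zero]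
    rw [norm_zero]
    field_simp
    norm_num
  have hswap : ∀ x y : OnePoint ℂ, sdist (sinv x) (sinv y) = sdist x y → sdist (sinv y) (sinv x) = sdist y x := by
    intro x y h; rw [sdist_comm, sdist_comm y x]; exact h
  -- main finite-finite computation
  have hff : ∀ a b : ℂ, a ≠ 0 → b ≠ 0 →
      sdist ((a⁻¹:ℂ) : OnePoint ℂ) ((b⁻¹:ℂ) : OnePoint ℂ) = sdist (a : OnePoint ℂ) (b : OnePoint ℂ) := by
    intro a b ha hb
    have hna : (0:ℝ) < ‖a‖ := norm_pos_iff.2 ha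
    have hnb : (0:ℝ) < ‖b‖ := norm_pos_iff.2 hb
    rw [sdist_coe_coe, sdist_coe_coe, sq1_inv ha, sq1_inv hb]
    have hsub : a⁻¹ - b⁻¹ = (b - a) * (a * b)⁻¹ := by field_simp
    rw [hsub, norm_mul, norm_inv, norm_mul, norm_sub_rev]
    have hA := sq1_pos a; have hB := sq1_pos b
    rw [div_eq_div_iff (by positivity) (by positivity)]
    field_simp [ne_of_gt hna, ne_of_gt hnb, ne_of_gt hA, ne_of_gt hB]
  have hcore2 : ∀ a : ℂ, a ≠ 0 → sdist ((a⁻¹ : ℂ) : OnePoint ℂ) ((0:ℂ) : OnePoint ℂ) = sdist ((a:ℂ) : OnePoint ℂ) ∞ := by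
    intro a ha
    have := hcore a⁻¹ (inv_ne_zero ha)
    rw [inv_inv] at this
    exact this.symm
  intro x y
  induction x using OnePoint.rec <;> induction y using OnePoint.rec
  · simp
  · -- x = ∞, y = coe b
    rename_i b
    by_cases hb : b = 0
    · subst hb; simp
    · rw [sinv_infty, sinv_coe_of_ne hb]
      calc sdist ((0:ℂ) : OnePoint ℂ) ((b⁻¹:ℂ) : OnePoint ℂ)
          = sdist ((b⁻¹:ℂ) : OnePoint ℂ) ((0:ℂ) : OnePoint ℂ) := sdist_comm _ _
      _ = sdist ((b:ℂ) : OnePoint ℂ) ∞ := hcore2 b hb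
      _ = sdist ∞ ((b:ℂ) : OnePoint ℂ) := sdist_comm _ _
  · -- x = coe a, y = ∞
    rename_i a
    by_cases ha : a = 0
    · subst ha; simp
    · rw [sinv_infty, sinv_coe_of_ne ha]
      exact hcore2 a ha
  · -- x = coe a, y = coe b
    rename_i a b
    by_cases ha : a = 0
    · subst ha
      by_cases hb : b = 0
      · subst hb; simp
      · rw [sinv_coe_zero, sinv_coe_of_ne hb]
        calc sdist ∞ ((b⁻¹:ℂ) : OnePoint ℂ)
            = sdist ((b⁻¹:ℂ) : OnePoint ℂ) ∞ := sdist_comm _ _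
        _ = sdist ((b:ℂ) : OnePoint ℂ) ((0:ℂ) : OnePoint ℂ) := hcore b hb
        _ = sdist ((0:ℂ) : OnePoint ℂ) ((b:ℂ) : OnePoint ℂ) := sdist_comm _ _
    · by_cases hb : b = 0
      · subst hb
        rw [sinv_coe_zero, sinv_coe_of_ne ha]
        exact hcore a ha
      · rw [sinv_coe_of_ne ha, sinv_coe_of_ne hb]
        exact hff a b ha hb

/-! ### `smulS` -/

@[simp] lemma smulS_coe (c a : ℂ) : smulS c (a : OnePoint ℂ) = ((c * a : ℂ) : OnePoint ℂ) := rfl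
@[simp] lemma smulS_infty (c : ℂ) : smulS c ∞ = ∞ := rfl

lemma sq1_le_smul {c : ℂ} (hc : c ≠ 0) (a : ℂ) :
    Real.sqrt (1 + ‖a‖ ^ 2) ≤ (1 + ‖c‖⁻¹) * Real.sqrt (1 + ‖c * a‖ ^ 2) := by
  have hγ : (0:ℝ) < ‖c‖ := norm_pos_iff.2 hc
  have hinv : (0:ℝ) < ‖c‖⁻¹ := inv_pos.2 hγ
  refine le_of_sq_le_sq (by positivity) ?_ (Real.sqrt_nonneg _)
  rw [mul_pow, sq1_sq, sq1_sq]
  have hre : (1 + ‖c‖⁻¹)^2 = (‖c‖ + 1)^2 / ‖c‖^2 := by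
    rw [eq_div_iff (by positivity : ‖c‖^2 ≠ 0)]
    have h1 : ‖c‖⁻¹ * ‖c‖ = 1 := inv_mul_cancel₀ (ne_of_gt hγ)
    nlinarith [h1]
  rw [hre, div_mul_eq_mul_div, le_div_iff₀ (by positivity)]
  rw [norm_mul]
  nlinarith [hγ, sq_nonneg ‖a‖, mul_nonneg (mul_nonneg hγ.le hγ.le) (sq_nonneg (‖c‖*‖a‖)),
    mul_nonneg hγ.le (sq_nonneg (‖c‖*‖a‖)), mul_nonneg (sq_nonneg ‖c‖) (sq_nonneg (‖c‖*‖a‖))]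

/-- `smulS c` is Lipschitz for the chordal metric. -/
lemma sdist_smulS_le {c : ℂ} (hc : c ≠ 0) (x y : OnePoint ℂ) :
    sdist (smulS c x) (smulS c y) ≤ (‖c‖ * (1 + ‖c‖⁻¹) ^ 2) * sdist x y := by
  have hγ : (0:ℝ) < ‖c‖ := norm_pos_iff.2 hc
  have hinv : (0:ℝ) < ‖c‖⁻¹ := inv_pos.2 hγ
  have hK : (1:ℝ) ≤ ‖c‖ * (1 + ‖c‖⁻¹) := by
    have h1 : ‖c‖ * ‖c‖⁻¹ = 1 := mul_inv_cancel₀ (ne_of_gt hγ)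
    nlinarith
  have hstep : ∀ b : ℂ, (1 + ‖c‖⁻¹) * Real.sqrt (1 + ‖c*b‖^2)
      ≤ (‖c‖ * (1 + ‖c‖⁻¹)^2) * Real.sqrt (1 + ‖c*b‖^2) := by
    intro b
    apply mul_le_mul_of_nonneg_right _ (Real.sqrt_nonneg _)
    nlinarith [hK, hinv]
  induction x using OnePoint.rec <;> induction y using OnePoint.rec
  · simp
  · -- ∞ , coe b
    rename_i b
    rw [smulS_infty, smulS_coe, sdist_infty_coe, sdist_infty_coe, mul_one_div,
      div_le_div_iff₀ (sq1_pos (c*b)) (sq1_pos b)]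
    nlinarith [sq1_le_smul hc b, hstep b, sq1_pos b, sq1_pos (c*b)]
  · -- coe a, ∞
    rename_i a
    rw [smulS_coe, smulS_infty, sdist_coe_infty, sdist_coe_infty, mul_one_div,
      div_le_div_iff₀ (sq1_pos (c*a)) (sq1_pos a)]
    nlinarith [sq1_le_smul hc a, hstep a, sq1_pos a, sq1_pos (c*a)]
  · -- coe a, coe b
    rename_i a b
    rw [smulS_coe, smulS_coe, sdist_coe_coe, sdist_coe_coe]
    have hca := sq1_pos (c * a); have hcb := sq1_pos (c * b)
    have hA := sq1_pos a; have hB := sq1_pos b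
    have hnum : ‖c * a - c * b‖ = ‖c‖ * ‖a - b‖ := by
      rw [← norm_mul, mul_sub]
    rw [mul_div_assoc' (‖c‖ * (1 + ‖c‖⁻¹) ^ 2), div_le_div_iff₀ (by positivity) (by positivity), hnum]
    have h1 := sq1_le_smul hc a
    have h2 := sq1_le_smul hc b
    calc ‖c‖ * ‖a - b‖ * (Real.sqrt (1 + ‖a‖ ^ 2) * Real.sqrt (1 + ‖b‖ ^ 2))
        ≤ ‖c‖ * ‖a - b‖ * (((1 + ‖c‖⁻¹) * Real.sqrt (1 + ‖c * a‖ ^ 2)) *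
            ((1 + ‖c‖⁻¹) * Real.sqrt (1 + ‖c * b‖ ^ 2))) := by
          apply mul_le_mul_of_nonneg_left _ (by positivity)
          apply mul_le_mul h1 h2 (le_of_lt hB) (by positivity)
    _ = ‖c‖ * (1 + ‖c‖⁻¹) ^ 2 * ‖a - b‖ * (Real.sqrt (1 + ‖c * a‖ ^ 2) * Real.sqrt (1 + ‖c * b‖ ^ 2)) := by
          ring

end Stmt6

namespace Stmt6

lemma coe_extract {x : OnePoint ℂ} (hx : x ≠ ∞) : x = ((extract x : ℂ) : OnePoint ℂ) := by
  induction x using OnePoint.rec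
  · exact absurd rfl hx
  · rfl

lemma rescale_apply (f : ℂ → OnePoint ℂ) (α β : ℝ) (h z : ℂ) :
    rescale f α β h z = smulS (h ^ (-(α:ℂ))) (f (h + h ^ (-(β:ℂ)) * z)) := rfl

lemma norm_cpow_real {h : ℂ} (hh : h ≠ 0) (r : ℝ) : ‖h ^ ((r:ℝ) : ℂ)‖ = ‖h‖ ^ r := by
  rw [Complex.norm_cpow_of_ne_zero hh]
  simp

lemma norm_cpow_neg_real {h : ℂ} (hh : h ≠ 0) (r : ℝ) : ‖h ^ (-(r:ℂ))‖ = ‖h‖ ^ (-r) := by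
  rw [show -(r:ℂ) = ((-r : ℝ) : ℂ) by push_cast; ring]
  exact norm_cpow_real hh (-r)

lemma cpow_neg_real_ne_zero {h : ℂ} (hh : h ≠ 0) (r : ℝ) : h ^ (-(r:ℂ)) ≠ 0 := by
  intro hc
  have h1 := norm_cpow_neg_real hh r
  rw [hc, norm_zero] at h1
  have h2 : (0:ℝ) < ‖h‖ ^ (-r) := Real.rpow_pos_of_pos (norm_pos_iff.2 hh) _
  rw [← h1] at h2
  exact lt_irrefl 0 h2

/-- `ε`-`δ` continuity with respect to the chordal metric. -/
def SCont (φ : ℂ → OnePoint ℂ) : Prop :=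
  ∀ z : ℂ, ∀ ε : ℝ, 0 < ε → ∃ δ : ℝ, 0 < δ ∧ ∀ w : ℂ, ‖w - z‖ < δ → sdist (φ w) (φ z) < ε

lemma scont_of_merom {f : ℂ → OnePoint ℂ} (hf : MeromorphicSphereOn f Set.univ) :
    SCont f := by
  intro z ε hε
  rcases hf z (mem_univ z) with ⟨g, hg, hev⟩ | ⟨g, hg, hev⟩ <;>
  · rcases Metric.eventually_nhds_iff.1 hev with ⟨δ₁, hδ₁, hball⟩
    have hc : ContinuousAt g z := hg.continuousAt
    rcases Metric.continuousAt_iff.1 hc ε hε with ⟨δ₂, hδ₂, hg2⟩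
    refine ⟨min δ₁ δ₂, lt_min hδ₁ hδ₂, fun w hw => ?_⟩
    have hw1 : dist w z < δ₁ := by rw [Complex.dist_eq]; exact lt_of_lt_of_le hw (min_le_left _ _)
    have hw2 : dist w z < δ₂ := by rw [Complex.dist_eq]; exact lt_of_lt_of_le hw (min_le_right _ _)
    have hz1 : dist z z < δ₁ := by simpa using hδ₁
    rw [hball hw1, hball hz1]
    first
    | exact lt_of_le_of_lt (sdist_coe_le_norm _ _)
        (by rw [← dist_eq_norm]; exact hg2 hw2)
    | · rw [sdist_sinv]
        exact lt_of_le_of_lt (sdist_coe_le_norm _ _)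
          (by rw [← dist_eq_norm]; exact hg2 hw2)

lemma scont_rescale {f : ℂ → OnePoint ℂ} (hf : MeromorphicSphereOn f Set.univ)
    (α β : ℝ) {h : ℂ} (hh : h ≠ 0) : SCont (rescale f α β h) := by
  intro z ε hε
  set c := h ^ (-(α:ℂ)) with hc
  have hc0 : c ≠ 0 := cpow_neg_real_ne_zero hh α
  set L := ‖c‖ * (1 + ‖c‖⁻¹) ^ 2 with hL
  have hL0 : 0 < L := by
    have := norm_pos_iff.2 hc0
    positivity
  set d := h ^ (-(β:ℂ)) with hd
  have hεL : 0 < ε / L := div_pos hε hL0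
  rcases scont_of_merom hf (h + d * z) (ε / L) hεL with ⟨δ₁, hδ₁, hcont⟩
  refine ⟨δ₁ / (‖d‖ + 1), by positivity, fun w hw => ?_⟩
  have harg : ‖(h + d * w) - (h + d * z)‖ < δ₁ := by
    have : (h + d * w) - (h + d * z) = d * (w - z) := by ring
    rw [this, norm_mul]
    calc ‖d‖ * ‖w - z‖ ≤ ‖d‖ * (δ₁ / (‖d‖ + 1)) := by
          apply mul_le_mul_of_nonneg_left (le_of_lt hw) (norm_nonneg d)
    _ < (‖d‖ + 1) * (δ₁ / (‖d‖ + 1)) := by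
          apply mul_lt_mul_of_pos_right _ (by positivity)
          linarith [norm_nonneg d]
    _ = δ₁ := by field_simp
  calc sdist (rescale f α β h w) (rescale f α β h z)
      = sdist (smulS c (f (h + d * w))) (smulS c (f (h + d * z))) := rfl
  _ ≤ L * sdist (f (h + d * w)) (f (h + d * z)) := sdist_smulS_le hc0 _ _
  _ < L * (ε / L) := by
      apply mul_lt_mul_of_pos_left _ hL0
      exact hcont _ harg
  _ = ε := by field_simp

lemma scont_of_conv {F : ℕ → ℂ → OnePoint ℂ} {φ : ℂ → OnePoint ℂ}
    (hconv : SphConvOn F φ Set.univ) (hF : ∀ n, SCont (F n)) : SCont φ := by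
  intro z ε hε
  have h3 : 0 < ε / 3 := by linarith
  have hev := hconv (Metric.closedBall z 1) (subset_univ _) (isCompact_closedBall z 1) (ε/3) h3
  rcases hev.exists with ⟨n, hn⟩
  rcases hF n z (ε/3) h3 with ⟨δ₁, hδ₁, hc⟩
  refine ⟨min δ₁ 1, lt_min hδ₁ one_pos, fun w hw => ?_⟩
  have hwK : w ∈ Metric.closedBall z 1 := by
    rw [Metric.mem_closedBall, Complex.dist_eq]
    exact le_of_lt (lt_of_lt_of_le hw (min_le_right _ _))
  have hzK : z ∈ Metric.closedBall z 1 := Metric.mem_closedBall_self zero_le_one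
  have h1 := hn w hwK
  have h2 := hn z hzK
  have h4 := hc w (lt_of_lt_of_le hw (min_le_left _ _))
  calc sdist (φ w) (φ z)
      ≤ sdist (φ w) (F n w) + sdist (F n w) (φ z) := sdist_triangle _ _ _
  _ ≤ sdist (φ w) (F n w) + (sdist (F n w) (F n z) + sdist (F n z) (φ z)) := by
      linarith [sdist_triangle (F n w) (φ z) (F n z)]
  _ = sdist (F n w) (φ w) + sdist (F n w) (F n z) + sdist (F n z) (φ z) := by
      rw [sdist_comm (φ w) (F n w)]; ring
  _ < ε/3 + ε/3 + ε/3 := by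
      have := sdist_comm (F n z) (φ z)
      gcongr <;> linarith [h1, h4, h2]
  _ = ε := by ring

lemma analyticAt_extract {f : ℂ → OnePoint ℂ} (hf : MeromorphicSphereOn f Set.univ)
    {z : ℂ} (hz : f z ≠ ∞) : AnalyticAt ℂ (fun w => extract (f w)) z := by
  rcases hf z (mem_univ z) with ⟨g, hg, hev⟩ | ⟨g, hg, hev⟩
  · apply hg.congr
    filter_upwards [hev] with w hw
    rw [hw, extract_coe]
  · have hgz : g z ≠ 0 := by
      intro h0
      apply hz
      have : f z = sinv ((g z : ℂ) : OnePoint ℂ) := hev.self_of_nhds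
      rw [this, h0]
      simp
    have hne : ∀ᶠ w in 𝓝 z, g w ≠ 0 := hg.continuousAt.eventually_ne hgz
    apply (hg.inv hgz).congr
    filter_upwards [hev, hne] with w hw hw0
    rw [hw, sinv_coe_of_ne hw0, extract_coe]; rfl

end Stmt6

namespace Stmt6

lemma lt_norm_of_sdist_infty_lt {a : ℂ} {ε : ℝ} (hε : 0 < ε)
    (h : sdist ((a : ℂ) : OnePoint ℂ) ∞ < ε) : 1/ε - 1 < ‖a‖ := by
  rw [sdist_coe_infty] at h
  have hS := sq1_pos a
  have h1 : 1 < ε * Real.sqrt (1 + ‖a‖ ^ 2) := by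
    rw [div_lt_iff₀ hS] at h; linarith [mul_comm ε (Real.sqrt (1 + ‖a‖ ^ 2))]
  have h2 : 1/ε < Real.sqrt (1 + ‖a‖ ^ 2) := by
    rw [div_lt_iff₀ hε]; linarith [mul_comm ε (Real.sqrt (1 + ‖a‖ ^ 2))]
  have h3 := sq1_le a
  linarith

/-- Hurwitz-type lemma: if analytic functions converge spherically to `φ` near `z₀`
and `φ z₀ = ∞`, then `φ ≡ ∞` near `z₀`. -/
lemma hurwitz_infty {G : ℕ → ℂ → ℂ} {φ : ℂ → OnePoint ℂ} {z₀ : ℂ} {s : ℝ} (hs : 0 < s)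
    (hdiff : ∀ᶠ n in atTop, DifferentiableOn ℂ (G n) (Metric.ball z₀ s))
    (hconv : ∀ ε : ℝ, 0 < ε → ∀ᶠ n in atTop,
      ∀ z ∈ Metric.closedBall z₀ (s/2), sdist ((G n z : ℂ) : OnePoint ℂ) (φ z) < ε)
    (hφ : SCont φ) (hz₀ : φ z₀ = ∞) :
    ∃ t : ℝ, 0 < t ∧ ∀ w : ℂ, ‖w - z₀‖ < t → φ w = ∞ := by
  classical
  obtain ⟨δc, hδc, hcont⟩ := hφ z₀ (1/4) (by norm_num)
  set s₁ : ℝ := min (s/2) (δc/2) with hs₁def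
  have hs₁ : 0 < s₁ := lt_min (by linarith) (by linarith)
  have hs₁s : s₁ ≤ s/2 := min_le_left _ _
  have hmem_cb : ∀ w : ℂ, w ∈ Metric.closedBall z₀ s₁ → w ∈ Metric.closedBall z₀ (s/2) :=
    fun w hw => Metric.closedBall_subset_closedBall hs₁s hw
  have hφ_small : ∀ w ∈ Metric.closedBall z₀ s₁, sdist (φ w) ∞ < 1/4 := by
    intro w hw
    rw [Metric.mem_closedBall, dist_eq_norm] at hw
    have h1 : ‖w - z₀‖ < δc := lt_of_le_of_lt (hw.trans (min_le_right _ _)) (by linarith)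
    have := hcont w h1
    rwa [hz₀] at this
  set χ : ℂ → ℂ := fun w => extract (sinv (φ w)) with hχdef
  -- pointwise structure of χ on the small ball
  have claimA : ∀ w ∈ Metric.closedBall z₀ s₁,
      sinv (φ w) = ((χ w : ℂ) : OnePoint ℂ) ∧ ‖χ w‖ ≤ 1 ∧ (χ w = 0 ↔ φ w = ∞) := by
    intro w hw
    by_cases hwi : φ w = ∞
    · refine ⟨by simp only [hχdef]; rw [hwi]; rfl, by simp [hχdef, hwi], by simp [hχdef, hwi]⟩
    · obtain ⟨b, hb⟩ : ∃ b : ℂ, φ w = ((b : ℂ) : OnePoint ℂ) :=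
        ⟨extract (φ w), coe_extract hwi⟩
      have hsmall := hφ_small w hw
      rw [hb] at hsmall
      have hblarge : (3:ℝ) < ‖b‖ := by
        have h5 := lt_norm_of_sdist_infty_lt (by norm_num : (0:ℝ) < 1/4) hsmall
        have h6 : 1/(1/4:ℝ) - 1 = 3 := by norm_num
        rw [h6] at h5; exact h5
      have hb0 : b ≠ 0 := by
        intro h0; rw [h0, norm_zero] at hblarge; linarith
      have hχw : χ w = b⁻¹ := by
        rw [hχdef]; simp only; rw [hb, sinv_coe_of_ne hb0, extract_coe]
      refine ⟨?_, ?_, ?_⟩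
      · rw [hb, sinv_coe_of_ne hb0, hχw]
      · rw [hχw, norm_inv]
        have : (1:ℝ) ≤ ‖b‖ := by linarith
        rw [inv_le_one_iff₀]; right; exact this
      · constructor
        · intro h0; exact absurd (by rwa [hχw] at h0) (inv_ne_zero hb0)
        · intro h0; exact absurd h0 hwi
  -- eventual lower bound for ‖G n z‖ on the small closed ball
  have hE1 : ∀ᶠ n in atTop, ∀ z ∈ Metric.closedBall z₀ s₁, 1 < ‖G n z‖ := by
    filter_upwards [hconv (1/4) (by norm_num)] with n hn
    intro z hz
    have h1 := hn z (hmem_cb z hz)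
    have h2 := hφ_small z hz
    have h3 : sdist ((G n z : ℂ) : OnePoint ℂ) ∞ < 1/2 :=
      lt_of_le_of_lt (sdist_triangle _ _ (φ z)) (by linarith)
    have h5 := lt_norm_of_sdist_infty_lt (by norm_num : (0:ℝ) < 1/2) h3
    have h6 : 1/(1/2:ℝ) - 1 = 1 := by norm_num
    rw [h6] at h5; exact h5
  -- uniform convergence of the reciprocals to χ
  have hE2 : TendstoUniformlyOn (fun n z => (G n z)⁻¹) χ atTop (Metric.closedBall z₀ s₁) := by
    rw [Metric.tendstoUniformlyOn_iff]
    intro ε hε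
    have hε5 : 0 < min (ε/5) (1/4) := lt_min (by linarith) (by norm_num)
    filter_upwards [hconv _ hε5, hE1] with n hn hlow
    intro z hz
    have hG1 : 1 < ‖G n z‖ := hlow z hz
    have hG0 : G n z ≠ 0 := by intro h0; rw [h0, norm_zero] at hG1; linarith
    obtain ⟨hA1, hA2, _⟩ := claimA z hz
    have hsd : sdist (((G n z)⁻¹ : ℂ) : OnePoint ℂ) ((χ z : ℂ) : OnePoint ℂ)
        = sdist ((G n z : ℂ) : OnePoint ℂ) (φ z) := by
      rw [← hA1, ← sinv_coe_of_ne hG0, sdist_sinv]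
    have hbound : ‖(G n z)⁻¹ - χ z‖ ≤ sdist (((G n z)⁻¹ : ℂ) : OnePoint ℂ)
        ((χ z : ℂ) : OnePoint ℂ) * (1 + 1)^2 := by
      apply norm_sub_le_of_sdist _ hA2
      rw [norm_inv]
      rw [inv_le_one_iff₀]; right; linarith
    have hlt := hn z (hmem_cb z hz)
    rw [dist_eq_norm, norm_sub_rev]
    calc ‖(G n z)⁻¹ - χ z‖ ≤ _ * (1+1)^2 := hbound
    _ < min (ε/5) (1/4) * 4 := by
        rw [hsd]
        have : ((1:ℝ)+1)^2 = 4 := by norm_num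
        rw [this]
        exact mul_lt_mul_of_pos_right hlt (by norm_num)
    _ ≤ ε/5 * 4 := by
        apply mul_le_mul_of_nonneg_right (min_le_left _ _) (by norm_num)
    _ < ε := by linarith
  -- χ is analytic near z₀
  have hE3 : ∀ᶠ n in atTop, DifferentiableOn ℂ (fun z => (G n z)⁻¹) (Metric.ball z₀ s₁) := by
    filter_upwards [hdiff, hE1] with n hd hlow
    apply DifferentiableOn.inv
    · exact hd.mono (Metric.ball_subset_ball (by linarith))
    · intro z hz
      have := hlow z (Metric.ball_subset_closedBall hz)
      intro h0; rw [h0, norm_zero] at this; linarith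
  have hχdiff : DifferentiableOn ℂ χ (Metric.ball z₀ s₁) :=
    (hE2.tendstoLocallyUniformlyOn.mono Metric.ball_subset_closedBall).differentiableOn
      hE3 Metric.isOpen_ball
  have hχan : AnalyticAt ℂ χ z₀ :=
    hχdiff.analyticAt (Metric.isOpen_ball.mem_nhds (Metric.mem_ball_self hs₁))
  rcases hχan.eventually_eq_zero_or_eventually_ne_zero with hcase | hcase
  · -- χ vanishes identically near z₀ : conclusion
    rcases Metric.eventually_nhds_iff.1 hcase with ⟨t', ht', hmap⟩
    refine ⟨min t' s₁, lt_min ht' hs₁, fun w hw => ?_⟩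
    have h1 : χ w = 0 := hmap (by
      rw [dist_eq_norm]; exact lt_of_lt_of_le hw (min_le_left _ _))
    have hwmem : w ∈ Metric.closedBall z₀ s₁ := by
      rw [Metric.mem_closedBall, dist_eq_norm]
      exact le_of_lt (lt_of_lt_of_le hw (min_le_right _ _))
    exact ((claimA w hwmem).2.2).1 h1
  · -- χ has an isolated zero at z₀ : contradiction via the maximum principle
    exfalso
    rw [eventually_nhdsWithin_iff] at hcase
    rcases Metric.eventually_nhds_iff.1 hcase with ⟨t', ht', hmap⟩
    set t : ℝ := min (t'/2) (s₁/2) with htdef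
    have ht : 0 < t := lt_min (by linarith) (by linarith)
    have hts : t < s₁ := lt_of_le_of_lt (min_le_right _ _) (by linarith)
    have hsphere_cb : Metric.sphere z₀ t ⊆ Metric.closedBall z₀ s₁ := fun w hw => by
      rw [Metric.mem_sphere] at hw
      rw [Metric.mem_closedBall, hw]; linarith
    have hsphere_b : Metric.sphere z₀ t ⊆ Metric.ball z₀ s₁ := fun w hw => by
      rw [Metric.mem_sphere] at hw
      rw [Metric.mem_ball, hw]; exact hts
    have hχ0 : ∀ w ∈ Metric.sphere z₀ t, χ w ≠ 0 := by
      intro w hw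
      rw [Metric.mem_sphere] at hw
      apply hmap
      · rw [hw]; exact lt_of_le_of_lt (min_le_left _ _) (by linarith)
      · intro h0
        rw [mem_singleton_iff] at h0
        rw [h0] at hw
        simp at hw
        linarith [hw, ht]
    have hnesph : (Metric.sphere z₀ t).Nonempty := NormedSpace.sphere_nonempty.2 ht.le
    obtain ⟨w₀, hw₀mem, hw₀min'⟩ := (isCompact_sphere z₀ t).exists_isMinOn hnesph
      ((hχdiff.continuousOn.mono hsphere_b).norm)
    have hw₀min : ∀ w ∈ Metric.sphere z₀ t, ‖χ w₀‖ ≤ ‖χ w‖ := fun w hw => hw₀min' hw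
    set m : ℝ := ‖χ w₀‖ with hmdef
    have hm : 0 < m := norm_pos_iff.2 (hχ0 w₀ hw₀mem)
    set ε'' : ℝ := 1 / (2/m + 2) with hε''def
    have hε''pos : 0 < ε'' := by positivity
    -- pick a good n
    have hz₀mem : z₀ ∈ Metric.closedBall z₀ (s/2) := Metric.mem_closedBall_self (by linarith)
    obtain ⟨n, hn1, hn2, hn3, hn4⟩ :=
      ((hconv ε'' hε''pos).and ((Metric.tendstoUniformlyOn_iff.1 hE2 (m/2) (by linarith)).and
        (hE1.and hdiff))).exists
    -- lower bound on ‖G n z₀‖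
    have hGz₀ : 2/m < ‖G n z₀‖ := by
      have h1 := hn1 z₀ hz₀mem
      rw [hz₀] at h1
      have h2 := lt_norm_of_sdist_infty_lt hε''pos h1
      have h3 : 1/ε'' - 1 = 2/m + 1 := by rw [hε''def]; field_simp; ring
      rw [h3] at h2; linarith
    -- upper bound on the sphere
    have hsphere_bound : ∀ w ∈ Metric.sphere z₀ t, ‖G n w‖ ≤ 2/m := by
      intro w hw
      have hq := hn2 w (hsphere_cb hw)
      have hGlow := hn3 w (hsphere_cb hw)
      have hG0 : G n w ≠ 0 := by intro h0; rw [h0, norm_zero] at hGlow; linarith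
      have hmw : m ≤ ‖χ w‖ := hw₀min w hw
      have hq2 : m/2 < ‖(G n w)⁻¹‖ := by
        rw [dist_eq_norm] at hq
        have h4 : ‖χ w‖ - ‖(G n w)⁻¹‖ ≤ ‖χ w - (G n w)⁻¹‖ := norm_sub_norm_le _ _
        linarith
      rw [norm_inv] at hq2
      have hGpos : 0 < ‖G n w‖ := norm_pos_iff.2 hG0
      rw [lt_inv_comm₀ (by linarith) hGpos] at hq2
      calc ‖G n w‖ ≤ (m/2)⁻¹ := le_of_lt hq2
      _ = 2/m := by rw [inv_div]
    -- maximum principle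
    have hdcc : DiffContOnCl ℂ (G n) (Metric.ball z₀ t) := by
      apply DifferentiableOn.diffContOnCl
      rw [closure_ball z₀ (ne_of_gt ht)]
      exact hn4.mono (fun w hw => by
        rw [Metric.mem_closedBall] at hw
        rw [Metric.mem_ball]
        calc dist w z₀ ≤ t := hw
        _ < s := by
          have : s₁ ≤ s/2 := hs₁s
          linarith)
    have hmax := Complex.norm_le_of_forall_mem_frontier_norm_le Metric.isBounded_ball hdcc
      (fun w hw => by
        rw [frontier_ball z₀ (ne_of_gt ht)] at hw
        exact hsphere_bound w hw)
      (subset_closure (Metric.mem_ball_self ht))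
    linarith

end Stmt6

namespace Stmt6

lemma exists_pole_bound {f : ℂ → OnePoint ℂ} (hP : (poles f).Finite) :
    ∃ R₀ : ℝ, 1 ≤ R₀ ∧ ∀ z : ℂ, R₀ < ‖z‖ → f z ≠ ∞ := by
  rcases (Metric.isBounded_iff_subset_closedBall 0).1 hP.isBounded with ⟨R, hR⟩
  refine ⟨max R 1, le_max_right _ _, fun z hz hzinf => ?_⟩
  have h1 : z ∈ poles f := hzinf
  have h2 := hR h1
  rw [Metric.mem_closedBall, dist_zero_right] at h2
  have := le_max_left R 1
  linarith

lemma tendsto_sub_rpow {c : ℝ} (hc : c < 1) {r : ℝ} (hr : 0 ≤ r) :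
    Tendsto (fun t : ℝ => t - r * t ^ c) atTop atTop := by
  have h0 : (0:ℝ) < 1 - c := by linarith
  have h1 : Tendsto (fun t : ℝ => t ^ (-(1 - c))) atTop (𝓝 0) := tendsto_rpow_neg_atTop h0
  have h2 : ∀ᶠ t : ℝ in atTop, t ^ (-(1 - c)) < 1 / (2 * (r + 1)) :=
    h1.eventually_lt_const (by positivity)
  have h3 : ∀ᶠ t : ℝ in atTop, (1:ℝ) ≤ t := eventually_ge_atTop 1
  refine tendsto_atTop_mono' atTop ?_ (tendsto_id.atTop_div_const (by norm_num : (0:ℝ) < 2))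
  · filter_upwards [h2, h3] with t ht2 ht3
    have htpos : (0:ℝ) < t := by linarith
    have hsplit : t ^ c = t ^ (c - 1) * t := by
      conv_lhs => rw [show c = c - 1 + 1 by ring]
      rw [Real.rpow_add htpos, Real.rpow_one]
    have hcc : t ^ (c - 1) = t ^ (-(1 - c)) := by ring_nf
    have hb : r * t ^ c ≤ t / 2 := by
      rw [hsplit, hcc]
      calc r * (t ^ (-(1 - c)) * t) = (r * t ^ (-(1 - c))) * t := by ring
      _ ≤ (r * (1 / (2 * (r + 1)))) * t := by
          apply mul_le_mul_of_nonneg_right _ (le_of_lt htpos)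
          apply mul_le_mul_of_nonneg_left (le_of_lt ht2) hr
      _ ≤ (1/2) * t := by
          apply mul_le_mul_of_nonneg_right _ (le_of_lt htpos)
          rw [mul_one_div, div_le_div_iff₀ (by positivity) (by norm_num)]
          nlinarith
      _ = t / 2 := by ring
    show id t / 2 ≤ t - r * t ^ c
    simp only [id]
    linarith

/-- The points sampled by the rescaled functions eventually escape any ball. -/
lemma arg_norm_eventually (β : ℝ) (hβ : -1 < β) {h : ℕ → ℂ} (h1 : ∀ n, 1 ≤ ‖h n‖)
    (htend : Tendsto (fun n => ‖h n‖) atTop atTop) (r R : ℝ) (hr : 0 ≤ r) :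
    ∀ᶠ n in atTop, ∀ z ∈ Metric.closedBall (0:ℂ) r,
      R < ‖h n + h n ^ (-(β:ℂ)) * z‖ := by
  set c : ℝ := max (-β) 0 with hcdef
  have hc : c < 1 := max_lt (by linarith) one_pos
  have key : Tendsto (fun n => ‖h n‖ - r * ‖h n‖ ^ c) atTop atTop :=
    (tendsto_sub_rpow hc hr).comp htend
  filter_upwards [key.eventually_gt_atTop R] with n hn z hz
  have hne : h n ≠ 0 := by
    intro h0
    have := h1 n
    rw [h0, norm_zero] at this; linarith
  rw [Metric.mem_closedBall, dist_zero_right] at hz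
  have hd : ‖h n ^ (-(β:ℂ))‖ = ‖h n‖ ^ (-β) := norm_cpow_neg_real hne β
  have hdc : ‖h n‖ ^ (-β) ≤ ‖h n‖ ^ c :=
    Real.rpow_le_rpow_of_exponent_le (h1 n) (le_max_left _ _)
  have hprod : ‖h n ^ (-(β:ℂ)) * z‖ ≤ ‖h n‖ ^ c * r := by
    rw [norm_mul, hd]
    apply mul_le_mul hdc hz (norm_nonneg z)
    positivity
  have htri : ‖h n‖ - ‖h n ^ (-(β:ℂ)) * z‖ ≤ ‖h n + h n ^ (-(β:ℂ)) * z‖ := by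
    have heq : h n = (h n + h n ^ (-(β:ℂ)) * z) - h n ^ (-(β:ℂ)) * z := by ring
    calc ‖h n‖ - ‖h n ^ (-(β:ℂ)) * z‖
        = ‖(h n + h n ^ (-(β:ℂ)) * z) - h n ^ (-(β:ℂ)) * z‖ - ‖h n ^ (-(β:ℂ)) * z‖ := by
          rw [← heq]
    _ ≤ _ := by
          have := norm_sub_le (h n + h n ^ (-(β:ℂ)) * z) (h n ^ (-(β:ℂ)) * z)
          linarith
  have : R < ‖h n‖ - ‖h n‖ ^ c * r := by
    calc R < ‖h n‖ - r * ‖h n‖ ^ c := hn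
    _ = ‖h n‖ - ‖h n‖ ^ c * r := by ring
  linarith

/-- The rescaled function, written with the explicit finite part. -/
lemma rescale_repr {f : ℂ → OnePoint ℂ} (α β : ℝ) (h z : ℂ)
    (hne : f (h + h ^ (-(β:ℂ)) * z) ≠ ∞) :
    rescale f α β h z
      = ((h ^ (-(α:ℂ)) * extract (f (h + h ^ (-(β:ℂ)) * z)) : ℂ) : OnePoint ℂ) := by
  rw [rescale_apply, show f (h + h ^ (-(β:ℂ)) * z)
    = ((extract (f (h + h ^ (-(β:ℂ)) * z)) : ℂ) : OnePoint ℂ) from coe_extract hne]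
  rfl

lemma G_differentiableAt {f : ℂ → OnePoint ℂ} (hmer : MeromorphicSphereOn f Set.univ)
    (α β : ℝ) (h : ℂ) {z : ℂ} (hne : f (h + h ^ (-(β:ℂ)) * z) ≠ ∞) :
    DifferentiableAt ℂ (fun w => h ^ (-(α:ℂ)) * extract (f (h + h ^ (-(β:ℂ)) * w))) z := by
  have haff : DifferentiableAt ℂ (fun w : ℂ => h + h ^ (-(β:ℂ)) * w) z :=
    (differentiableAt_const _).add (differentiableAt_id.const_mul _)
  have hext : DifferentiableAt ℂ (fun w => extract (f w)) (h + h ^ (-(β:ℂ)) * z) :=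
    (analyticAt_extract hmer hne).differentiableAt
  exact (hext.comp z haff).const_mul _

/-- A spherical limit of the rescaled family along `h n → ∞` never takes the value `∞`
when `f` has finitely many poles (it would otherwise be identically `∞`). -/
lemma limit_no_infty {f : ℂ → OnePoint ℂ} {α β : ℝ} (hβ : -1 < β)
    (hmer : MeromorphicSphereOn f Set.univ) (hP : (poles f).Finite) {h : ℕ → ℂ}
    (h1 : ∀ n, 1 ≤ ‖h n‖) (htend : Tendsto (fun n => ‖h n‖) atTop atTop)
    {φ : ℂ → OnePoint ℂ}
    (hconv : SphConvOn (fun n => rescale f α β (h n)) φ Set.univ)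
    (hnc : ¬ ∃ c : OnePoint ℂ, ∀ z ∈ Set.univ, φ z = c) :
    ∀ z : ℂ, φ z ≠ ∞ := by
  obtain ⟨R₀, hR₀1, hR₀⟩ := exists_pole_bound hP
  set G : ℕ → ℂ → ℂ := fun n w => h n ^ (-(α:ℂ)) * extract (f (h n + h n ^ (-(β:ℂ)) * w))
    with hGdef
  have hne0 : ∀ n, h n ≠ 0 := by
    intro n h0
    have := h1 n
    rw [h0, norm_zero] at this; linarith
  have hφc : SCont φ :=
    scont_of_conv hconv (fun n => scont_rescale hmer α β (hne0 n))
  -- Hurwitz propagation at any point where φ = ∞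
  have hopen : ∀ z₀ : ℂ, φ z₀ = ∞ → ∃ t : ℝ, 0 < t ∧ ∀ w, ‖w - z₀‖ < t → φ w = ∞ := by
    intro z₀ h0
    have hsub : Metric.closedBall z₀ (‖z₀‖ + 2) ⊆ Metric.closedBall (0:ℂ) (‖z₀‖ + (‖z₀‖ + 2)) := by
      intro w hw
      rw [Metric.mem_closedBall, dist_zero_right]
      rw [Metric.mem_closedBall, dist_eq_norm] at hw
      calc ‖w‖ = ‖(w - z₀) + z₀‖ := by ring_nf
      _ ≤ ‖w - z₀‖ + ‖z₀‖ := norm_add_le _ _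
      _ ≤ ‖z₀‖ + (‖z₀‖ + 2) := by linarith
    have hargev := arg_norm_eventually β hβ h1 htend (‖z₀‖ + (‖z₀‖ + 2)) R₀
      (by positivity)
    apply hurwitz_infty (G := G) (s := 2) (by norm_num) _ _ hφc h0
    · -- differentiability on ball z₀ 2
      filter_upwards [hargev] with n hn
      intro z hz
      rw [Metric.mem_ball, dist_eq_norm] at hz
      have hzmem : z ∈ Metric.closedBall (0:ℂ) (‖z₀‖ + (‖z₀‖ + 2)) := by
        apply hsub
        rw [Metric.mem_closedBall, dist_eq_norm]
        linarith [norm_nonneg z₀]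
      have hnepole : f (h n + h n ^ (-(β:ℂ)) * z) ≠ ∞ := hR₀ _ (hn z hzmem)
      exact (G_differentiableAt hmer α β (h n) hnepole).differentiableWithinAt
    · -- spherical convergence on closedBall z₀ 1
      intro ε hε
      have hKcompact : IsCompact (Metric.closedBall z₀ (2/2)) := isCompact_closedBall _ _
      filter_upwards [hconv (Metric.closedBall z₀ (2/2)) (subset_univ _) hKcompact ε hε,
        hargev] with n hn hcnv
      intro z hz
      have hzmem : z ∈ Metric.closedBall (0:ℂ) (‖z₀‖ + (‖z₀‖ + 2)) := by
        apply hsub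
        rw [Metric.mem_closedBall] at hz ⊢
        have := norm_nonneg z₀
        have h22 : (2:ℝ)/2 = 1 := by norm_num
        rw [h22] at hz
        linarith
      have hnepole : f (h n + h n ^ (-(β:ℂ)) * z) ≠ ∞ := hR₀ _ (hcnv z hzmem)
      have hrepr := rescale_repr α β (h n) z hnepole
      have := hn z hz
      rw [hrepr] at this
      exact this
  -- the set of ∞-points is clopen
  intro z₀ hz₀
  set A : Set ℂ := {z | φ z = ∞} with hAdef
  have hAopen : IsOpen A := by
    rw [Metric.isOpen_iff]
    intro z hz
    obtain ⟨t, ht, hmap⟩ := hopen z hz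
    exact ⟨t, ht, fun w hw => hmap w (by rwa [← dist_eq_norm, ← Metric.mem_ball])⟩
  have hAclosed : IsClosed A := by
    rw [← isOpen_compl_iff, Metric.isOpen_iff]
    intro z hz
    have hzne : φ z ≠ ∞ := hz
    have hpos : 0 < sdist (φ z) ∞ := sdist_pos_of_ne hzne
    obtain ⟨δ, hδ, hmap⟩ := hφc z (sdist (φ z) ∞ / 2) (by linarith)
    refine ⟨δ, hδ, fun w hw => ?_⟩
    rw [Metric.mem_ball, dist_eq_norm] at hw
    intro hwinf
    have hwi : φ w = ∞ := hwinf
    have h2 := hmap w hw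
    have h3 : sdist (φ z) ∞ ≤ sdist (φ z) (φ w) + sdist (φ w) ∞ := sdist_triangle _ _ _
    have h4 : sdist (φ w) ∞ = 0 := by rw [hwi]; exact sdist_infty_infty
    have h5 : sdist (φ z) (φ w) = sdist (φ w) (φ z) := sdist_comm _ _
    linarith
  have hclopen : IsClopen A := ⟨hAclosed, hAopen⟩
  have huniv : A = Set.univ := hclopen.eq_univ ⟨z₀, hz₀⟩
  apply hnc
  refine ⟨∞, fun z _ => ?_⟩
  have : z ∈ A := huniv ▸ mem_univ z
  exact this

end Stmt6

namespace Stmt6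

lemma sdist_coe_infty_ge (a : ℂ) : 1 / (1 + ‖a‖) ≤ sdist ((a:ℂ) : OnePoint ℂ) ∞ := by
  rw [sdist_coe_infty]
  apply div_le_div_of_nonneg_left zero_le_one (sq1_pos a) (sq1_le a)

lemma subseq_norm_tendsto {w : ℕ → ℂ} (hw : ∀ n : ℕ, max (n:ℝ) 1 ≤ ‖w n‖) {σ : ℕ → ℕ}
    (hσ : StrictMono σ) : Tendsto (fun n => ‖w (σ n)‖) atTop atTop := by
  apply tendsto_atTop_mono _ tendsto_natCast_atTop_atTop
  intro n
  calc (n:ℝ) ≤ (σ n : ℝ) := by exact_mod_cast hσ.id_le n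
  _ ≤ max (σ n : ℝ) 1 := le_max_left _ _
  _ ≤ ‖w (σ n)‖ := hw (σ n)

lemma eq_of_sdist_lt {x y : OnePoint ℂ} (h : ∀ ε : ℝ, 0 < ε → sdist x y < ε) : x = y := by
  by_contra hne
  have := sdist_pos_of_ne hne
  exact lt_irrefl _ (h _ this)

/-- The growth estimate `‖f(w)‖ = O(‖w‖^α)` near `∞`, given finitely many poles. -/
lemma growth_bound {f : ℂ → OnePoint ℂ} {α β : ℝ} (hβ : -1 < β) (hf : MemY α β f)
    (hP : (poles f).Finite) :
    ∃ C : ℝ, 0 < C ∧ ∃ R₁ : ℝ, 1 ≤ R₁ ∧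
      ∀ w : ℂ, R₁ ≤ ‖w‖ → ‖extract (f w)‖ ≤ C * ‖w‖ ^ α := by
  by_contra hcon
  push_neg at hcon
  have hsel : ∀ n : ℕ, ∃ w : ℂ, max (n:ℝ) 1 ≤ ‖w‖ ∧
      ((n:ℝ)+1) * ‖w‖ ^ α < ‖extract (f w)‖ := by
    intro n
    obtain ⟨w, hw1, hw2⟩ := hcon ((n:ℝ)+1) (by positivity) (max (n:ℝ) 1) (le_max_right _ _)
    exact ⟨w, hw1, hw2⟩
  choose w hw1 hw2 using hsel
  have hw1' : ∀ n, 1 ≤ ‖w n‖ := fun n => le_trans (le_max_right _ _) (hw1 n)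
  have hwpos : ∀ n, (0:ℝ) < ‖w n‖ := fun n => lt_of_lt_of_le one_pos (hw1' n)
  have hwne : ∀ n, w n ≠ 0 := fun n => norm_pos_iff.1 (hwpos n)
  obtain ⟨σ, hσ, φ, hφ⟩ := hf.normal (fun n => rescale f α β (w n))
    (fun n => ⟨w n, hw1' n, rfl⟩)
  have htends : Tendsto (fun n => ‖w (σ n)‖) atTop atTop := subseq_norm_tendsto hw1 hσ
  have hnc := hf.nonconst (fun n => w (σ n)) φ (fun n => hw1' (σ n)) htends hφ
  have hnoinf := limit_no_infty hβ hf.merom hP (fun n => hw1' (σ n)) htends hφ hnc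
  apply hnoinf 0
  apply eq_of_sdist_lt
  intro ε hε
  have hconv0 := hφ {0} (subset_univ _) isCompact_singleton (ε/2) (by linarith)
  obtain ⟨n, hn1, hn2⟩ := (hconv0.and (eventually_ge_atTop ⌈2/ε⌉₊)).exists
  have h1 : sdist (rescale f α β (w (σ n)) 0) (φ 0) < ε/2 := hn1 0 (mem_singleton 0)
  have hσn : 2/ε ≤ ((σ n : ℝ) + 1) := by
    have hr1 : (2/ε : ℝ) ≤ (⌈2/ε⌉₊ : ℝ) := Nat.le_ceil _
    have hr2 : (⌈2/ε⌉₊ : ℝ) ≤ (n : ℝ) := by exact_mod_cast hn2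
    have hr3 : (n : ℝ) ≤ (σ n : ℝ) := by exact_mod_cast hσ.id_le n
    linarith
  have hσpos : (0:ℝ) < (σ n : ℝ) + 1 := by positivity
  have h2 : sdist (rescale f α β (w (σ n)) 0) ∞ ≤ ε/2 := by
    have hpt : w (σ n) + w (σ n) ^ (-(β:ℂ)) * 0 = w (σ n) := by ring
    by_cases hinf : f (w (σ n)) = ∞
    · have hr : rescale f α β (w (σ n)) 0 = ∞ := by
        rw [rescale_apply, hpt, hinf]; rfl
      rw [hr, sdist_infty_infty]; linarith
    · have hrep : rescale f α β (w (σ n)) 0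
          = ((w (σ n) ^ (-(α:ℂ)) * extract (f (w (σ n))) : ℂ) : OnePoint ℂ) := by
        have hx := rescale_repr α β (w (σ n)) 0 (by rwa [hpt])
        rwa [hpt] at hx
      have hnorm : ((σ n : ℝ) + 1) < ‖w (σ n) ^ (-(α:ℂ)) * extract (f (w (σ n)))‖ := by
        rw [norm_mul, norm_cpow_neg_real (hwne (σ n))]
        calc ((σ n : ℝ) + 1)
            = ‖w (σ n)‖ ^ (-α) * (((σ n : ℝ)+1) * ‖w (σ n)‖ ^ α) := by
              rw [show ‖w (σ n)‖ ^ (-α) * (((σ n : ℝ)+1) * ‖w (σ n)‖ ^ α)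
                  = ((σ n : ℝ)+1) * (‖w (σ n)‖ ^ (-α) * ‖w (σ n)‖ ^ α) by ring,
                ← Real.rpow_add (hwpos (σ n)), neg_add_cancel, Real.rpow_zero, mul_one]
        _ < ‖w (σ n)‖ ^ (-α) * ‖extract (f (w (σ n)))‖ := by
              exact mul_lt_mul_of_pos_left (hw2 (σ n))
                (Real.rpow_pos_of_pos (hwpos (σ n)) _)
      have hvne : w (σ n) ^ (-(α:ℂ)) * extract (f (w (σ n))) ≠ 0 := by
        intro h0
        rw [h0, norm_zero] at hnorm
        linarith
      rw [hrep]
      calc sdist _ ∞ ≤ ‖w (σ n) ^ (-(α:ℂ)) * extract (f (w (σ n)))‖⁻¹ :=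
            sdist_infty_le_inv_norm hvne
      _ ≤ ((σ n : ℝ) + 1)⁻¹ := by
            apply inv_anti₀ hσpos (le_of_lt hnorm)
      _ ≤ (2/ε)⁻¹ := by
            apply inv_anti₀ (by positivity) hσn
      _ = ε/2 := by rw [inv_div]
  calc sdist (φ 0) ∞ ≤ sdist (φ 0) (rescale f α β (w (σ n)) 0)
        + sdist (rescale f α β (w (σ n)) 0) ∞ := sdist_triangle _ _ _
  _ < ε/2 + ε/2 := by
      apply add_lt_add_of_lt_of_le _ h2
      rw [sdist_comm]; exact h1
  _ = ε := by ring

end Stmt6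

namespace Stmt6

lemma eventually_rpow_half {c r : ℝ} (hc : c < 1) (hr : 0 ≤ r) :
    ∀ᶠ t : ℝ in atTop, r * t ^ c ≤ t / 2 := by
  have h0 : (0:ℝ) < 1 - c := by linarith
  have h2 : ∀ᶠ t : ℝ in atTop, t ^ (-(1 - c)) < 1 / (2 * (r + 1)) :=
    (tendsto_rpow_neg_atTop h0).eventually_lt_const (by positivity)
  filter_upwards [h2, eventually_ge_atTop (1:ℝ)] with t ht2 ht3
  have htpos : (0:ℝ) < t := by linarith
  have hsplit : t ^ c = t ^ (c - 1) * t := by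
    conv_lhs => rw [show c = c - 1 + 1 by ring]
    rw [Real.rpow_add htpos, Real.rpow_one]
  have hcc : t ^ (c - 1) = t ^ (-(1 - c)) := by ring_nf
  rw [hsplit, hcc]
  calc r * (t ^ (-(1 - c)) * t) = (r * t ^ (-(1 - c))) * t := by ring
  _ ≤ (r * (1 / (2 * (r + 1)))) * t := by
      apply mul_le_mul_of_nonneg_right _ (le_of_lt htpos)
      apply mul_le_mul_of_nonneg_left (le_of_lt ht2) hr
  _ ≤ (1/2) * t := by
      apply mul_le_mul_of_nonneg_right _ (le_of_lt htpos)
      rw [mul_one_div, div_le_div_iff₀ (by positivity) (by norm_num)]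
      nlinarith
  _ = t / 2 := by ring

lemma poles_infinite {f : ℂ → OnePoint ℂ} {α β : ℝ} (hβ : -1 < β) (hf : MemY α β f) :
    (poles f).Infinite := by
  by_contra hfin
  rw [Set.not_infinite] at hfin
  obtain ⟨C, hC, R₁, hR₁, hgrow⟩ := growth_bound hβ hf hfin
  obtain ⟨R₀, hR₀1, hR₀⟩ := exists_pole_bound hfin
  set M : ℝ := max R₀ R₁ with hMdef
  have hM1 : 1 ≤ M := le_trans hR₀1 (le_max_left _ _)
  set h : ℕ → ℂ := fun n => ((M + n : ℝ) : ℂ) with hhdef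
  have hnorm : ∀ n : ℕ, ‖h n‖ = M + n := by
    intro n
    rw [hhdef]
    simp only []
    rw [Complex.norm_real, Real.norm_of_nonneg (by positivity)]
  have h1 : ∀ n : ℕ, 1 ≤ ‖h n‖ := by
    intro n
    rw [hnorm n]
    have : (0:ℝ) ≤ n := Nat.cast_nonneg n
    linarith
  have htend : Tendsto (fun n => ‖h n‖) atTop atTop := by
    apply Tendsto.congr (f₁ := fun n : ℕ => M + (n:ℝ))
    · intro n; rw [hnorm n]
    · exact tendsto_atTop_add_const_left atTop M tendsto_natCast_atTop_atTop
  obtain ⟨σ, hσ, φ, hφ⟩ := hf.normal (fun n => rescale f α β (h n))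
    (fun n => ⟨h n, h1 n, rfl⟩)
  have hσat : Tendsto σ atTop atTop := hσ.tendsto_atTop
  have htends : Tendsto (fun n => ‖h (σ n)‖) atTop atTop := htend.comp hσat
  have h1σ : ∀ n, 1 ≤ ‖h (σ n)‖ := fun n => h1 (σ n)
  have hHposσ : ∀ n, (0:ℝ) < ‖h (σ n)‖ := fun n => lt_of_lt_of_le one_pos (h1σ n)
  have hHneσ : ∀ n, h (σ n) ≠ 0 := fun n => norm_pos_iff.1 (hHposσ n)
  have hnc := hf.nonconst (fun n => h (σ n)) φ h1σ htends hφ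
  have hnoinf := limit_no_infty hβ hf.merom hfin h1σ htends hφ hnc
  set G : ℕ → ℂ → ℂ :=
    fun n z => h (σ n) ^ (-(α:ℂ)) * extract (f (h (σ n) + h (σ n) ^ (-(β:ℂ)) * z)) with hGdef
  set B : ℝ := C * (2:ℝ) ^ |α| with hBdef
  have h2abs : (0:ℝ) < (2:ℝ) ^ |α| := Real.rpow_pos_of_pos (by norm_num) _
  have hBpos : 0 < B := mul_pos hC h2abs
  set c : ℝ := max (-β) 0 with hcdef
  have hc1 : c < 1 := max_lt (by linarith) one_pos
  -- uniform bound on G over compacts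
  have hGbound : ∀ r : ℝ, 0 ≤ r → ∀ᶠ n in atTop,
      ∀ z ∈ Metric.closedBall (0:ℂ) r, ‖G n z‖ ≤ B := by
    intro r hr
    have hargev := arg_norm_eventually β hβ h1σ htends r M
    have hhalf : ∀ᶠ n in atTop, r * ‖h (σ n)‖ ^ c ≤ ‖h (σ n)‖ / 2 :=
      htends.eventually (eventually_rpow_half hc1 hr)
    filter_upwards [hargev hr, hhalf] with n hn hhn z hz
    have hHpos := hHposσ n
    have hHne := hHneσ n
    have hptM : M < ‖h (σ n) + h (σ n) ^ (-(β:ℂ)) * z‖ := hn z hz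
    have hptR₁ : R₁ ≤ ‖h (σ n) + h (σ n) ^ (-(β:ℂ)) * z‖ :=
      le_trans (le_max_right R₀ R₁) (le_of_lt hptM)
    have hptpos : (0:ℝ) < ‖h (σ n) + h (σ n) ^ (-(β:ℂ)) * z‖ := by linarith
    rw [Metric.mem_closedBall, dist_zero_right] at hz
    have hdznorm : ‖h (σ n) ^ (-(β:ℂ)) * z‖ ≤ ‖h (σ n)‖ / 2 := by
      rw [norm_mul, norm_cpow_neg_real hHne]
      calc ‖h (σ n)‖ ^ (-β) * ‖z‖ ≤ ‖h (σ n)‖ ^ c * r := by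
            apply mul_le_mul (Real.rpow_le_rpow_of_exponent_le (h1σ n) (le_max_left _ _))
              hz (norm_nonneg z) (le_of_lt (Real.rpow_pos_of_pos hHpos c))
      _ = r * ‖h (σ n)‖ ^ c := by ring
      _ ≤ ‖h (σ n)‖ / 2 := hhn
    have hub : ‖h (σ n) + h (σ n) ^ (-(β:ℂ)) * z‖ ≤ 2 * ‖h (σ n)‖ := by
      calc ‖h (σ n) + h (σ n) ^ (-(β:ℂ)) * z‖
          ≤ ‖h (σ n)‖ + ‖h (σ n) ^ (-(β:ℂ)) * z‖ := norm_add_le _ _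
      _ ≤ ‖h (σ n)‖ + ‖h (σ n)‖ / 2 := by linarith
      _ ≤ 2 * ‖h (σ n)‖ := by linarith
    have hlb : ‖h (σ n)‖ / 2 ≤ ‖h (σ n) + h (σ n) ^ (-(β:ℂ)) * z‖ := by
      have htri : ‖h (σ n)‖ - ‖h (σ n) ^ (-(β:ℂ)) * z‖
          ≤ ‖h (σ n) + h (σ n) ^ (-(β:ℂ)) * z‖ := by
        have heq : h (σ n) = (h (σ n) + h (σ n) ^ (-(β:ℂ)) * z) - h (σ n) ^ (-(β:ℂ)) * z := by
          ring
        calc ‖h (σ n)‖ - ‖h (σ n) ^ (-(β:ℂ)) * z‖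
            = ‖(h (σ n) + h (σ n) ^ (-(β:ℂ)) * z) - h (σ n) ^ (-(β:ℂ)) * z‖
              - ‖h (σ n) ^ (-(β:ℂ)) * z‖ := by rw [← heq]
        _ ≤ _ := by
            have := norm_sub_le (h (σ n) + h (σ n) ^ (-(β:ℂ)) * z) (h (σ n) ^ (-(β:ℂ)) * z)
            linarith
      linarith
    have hgr := hgrow _ hptR₁
    have hGnorm : ‖G n z‖ = ‖h (σ n)‖ ^ (-α) * ‖extract (f (h (σ n) + h (σ n) ^ (-(β:ℂ)) * z))‖ := by
      rw [hGdef]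
      simp only []
      rw [norm_mul, norm_cpow_neg_real hHne]
    rw [hGnorm]
    have hHinv : ‖h (σ n)‖ ^ (-α) * ‖h (σ n)‖ ^ α = 1 := by
      rw [← Real.rpow_add hHpos, neg_add_cancel, Real.rpow_zero]
    have hHαpos : (0:ℝ) < ‖h (σ n)‖ ^ (-α) := Real.rpow_pos_of_pos hHpos _
    rcases le_or_gt 0 α with hα | hα
    · -- α ≥ 0
      have hpt : ‖h (σ n) + h (σ n) ^ (-(β:ℂ)) * z‖ ^ α ≤ (2 * ‖h (σ n)‖) ^ α :=
        Real.rpow_le_rpow (norm_nonneg _) hub hα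
      have h2H : ((2:ℝ) * ‖h (σ n)‖) ^ α = (2:ℝ) ^ α * ‖h (σ n)‖ ^ α :=
        Real.mul_rpow (by norm_num) (norm_nonneg _)
      have h2α : (2:ℝ) ^ α ≤ (2:ℝ) ^ |α| :=
        Real.rpow_le_rpow_of_exponent_le one_le_two (le_abs_self α)
      calc ‖h (σ n)‖ ^ (-α) * ‖extract (f (h (σ n) + h (σ n) ^ (-(β:ℂ)) * z))‖
          ≤ ‖h (σ n)‖ ^ (-α) * (C * ‖h (σ n) + h (σ n) ^ (-(β:ℂ)) * z‖ ^ α) := by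
            apply mul_le_mul_of_nonneg_left hgr (le_of_lt hHαpos)
      _ ≤ ‖h (σ n)‖ ^ (-α) * (C * ((2:ℝ) ^ α * ‖h (σ n)‖ ^ α)) := by
            apply mul_le_mul_of_nonneg_left _ (le_of_lt hHαpos)
            apply mul_le_mul_of_nonneg_left _ (le_of_lt hC)
            rw [← h2H]; exact hpt
      _ = C * (2:ℝ) ^ α * (‖h (σ n)‖ ^ (-α) * ‖h (σ n)‖ ^ α) := by ring
      _ = C * (2:ℝ) ^ α := by rw [hHinv, mul_one]
      _ ≤ B := by
            rw [hBdef]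
            apply mul_le_mul_of_nonneg_left h2α (le_of_lt hC)
    · -- α < 0
      have hpt : ‖h (σ n) + h (σ n) ^ (-(β:ℂ)) * z‖ ^ α ≤ (‖h (σ n)‖ / 2) ^ α :=
        Real.rpow_le_rpow_of_nonpos (by linarith) hlb (le_of_lt hα)
      have h2H : (‖h (σ n)‖ / (2:ℝ)) ^ α = ‖h (σ n)‖ ^ α / (2:ℝ) ^ α :=
        Real.div_rpow (norm_nonneg _) (by norm_num) α
      have h2α : (2:ℝ) ^ (-α) ≤ (2:ℝ) ^ |α| :=
        Real.rpow_le_rpow_of_exponent_le one_le_two (neg_le_abs α)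
      have h2pos : (0:ℝ) < (2:ℝ) ^ α := Real.rpow_pos_of_pos (by norm_num) _
      calc ‖h (σ n)‖ ^ (-α) * ‖extract (f (h (σ n) + h (σ n) ^ (-(β:ℂ)) * z))‖
          ≤ ‖h (σ n)‖ ^ (-α) * (C * ‖h (σ n) + h (σ n) ^ (-(β:ℂ)) * z‖ ^ α) := by
            apply mul_le_mul_of_nonneg_left hgr (le_of_lt hHαpos)
      _ ≤ ‖h (σ n)‖ ^ (-α) * (C * (‖h (σ n)‖ ^ α / (2:ℝ) ^ α)) := by
            apply mul_le_mul_of_nonneg_left _ (le_of_lt hHαpos)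
            apply mul_le_mul_of_nonneg_left _ (le_of_lt hC)
            rw [← h2H]; exact hpt
      _ = C * ((2:ℝ) ^ α)⁻¹ * (‖h (σ n)‖ ^ (-α) * ‖h (σ n)‖ ^ α) := by
            field_simp
      _ = C * ((2:ℝ) ^ α)⁻¹ := by rw [hHinv, mul_one]
      _ = C * (2:ℝ) ^ (-α) := by rw [← Real.rpow_neg (by norm_num : (0:ℝ) ≤ 2)]
      _ ≤ B := by
            rw [hBdef]
            apply mul_le_mul_of_nonneg_left h2α (le_of_lt hC)
  -- representation of the rescaled maps on compacts
  have hrepr : ∀ r : ℝ, 0 ≤ r → ∀ᶠ n in atTop,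
      ∀ z ∈ Metric.closedBall (0:ℂ) r,
        rescale f α β (h (σ n)) z = ((G n z : ℂ) : OnePoint ℂ) ∧
        f (h (σ n) + h (σ n) ^ (-(β:ℂ)) * z) ≠ ∞ := by
    intro r hr
    filter_upwards [arg_norm_eventually β hβ h1σ htends r R₀ hr] with n hn z hz
    have hnep : f (h (σ n) + h (σ n) ^ (-(β:ℂ)) * z) ≠ ∞ := hR₀ _ (hn z hz)
    exact ⟨rescale_repr α β (h (σ n)) z hnep, hnep⟩
  -- finite limit function
  set ψ : ℂ → ℂ := fun z => extract (φ z) with hψdef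
  have hφcoe : ∀ z, φ z = ((ψ z : ℂ) : OnePoint ℂ) := fun z => coe_extract (hnoinf z)
  set δB : ℝ := 1/(1 + B) with hδBdef
  have hδB : 0 < δB := by positivity
  set B' : ℝ := (δB/2)⁻¹ with hB'def
  have hB' : 0 < B' := by positivity
  have hψb : ∀ z : ℂ, ‖ψ z‖ ≤ B' := by
    intro z
    have hzK : z ∈ Metric.closedBall (0:ℂ) ‖z‖ := by
      rw [Metric.mem_closedBall, dist_zero_right]
    obtain ⟨n, hb, hrep, hcv⟩ := ((hGbound ‖z‖ (norm_nonneg z)).and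
      ((hrepr ‖z‖ (norm_nonneg z)).and
        (hφ (Metric.closedBall 0 ‖z‖) (subset_univ _) (isCompact_closedBall _ _)
          (δB/2) (by positivity)))).exists
    have hGb := hb z hzK
    have hcd : sdist ((G n z : ℂ) : OnePoint ℂ) (φ z) < δB/2 := by
      have h0 : sdist (rescale f α β (h (σ n)) z) (φ z) < δB/2 := hcv z hzK
      rwa [(hrep z hzK).1] at h0
    have h1 : δB ≤ sdist ((G n z : ℂ) : OnePoint ℂ) ∞ := by
      calc δB = 1/(1 + B) := rfl
      _ ≤ 1/(1 + ‖G n z‖) := by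
          apply div_le_div_of_nonneg_left zero_le_one (by positivity)
          linarith
      _ ≤ _ := sdist_coe_infty_ge _
    have h2 : sdist ((G n z : ℂ) : OnePoint ℂ) ∞
        ≤ sdist ((G n z : ℂ) : OnePoint ℂ) (φ z) + sdist (φ z) ∞ := sdist_triangle _ _ _
    have h3 : δB/2 ≤ sdist (φ z) ∞ := by linarith
    rw [hφcoe z] at h3
    exact norm_le_of_sdist_infty (by positivity) h3
  -- ψ is entire
  have hdiffψ : Differentiable ℂ ψ := by
    intro z₁
    set r : ℝ := ‖z₁‖ + 1 with hrdef
    have hrpos : (0:ℝ) ≤ r := by positivity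
    set M' : ℝ := max B B' with hM'def
    have hM'pos : 0 < M' := lt_of_lt_of_le hBpos (le_max_left _ _)
    have hUnif : TendstoUniformlyOn (fun n z => G n z) ψ atTop (Metric.closedBall 0 r) := by
      rw [Metric.tendstoUniformlyOn_iff]
      intro ε hε
      have hden : (0:ℝ) < (1 + M')^2 + 1 := by positivity
      filter_upwards [hGbound r hrpos, hrepr r hrpos,
        hφ (Metric.closedBall 0 r) (subset_univ _) (isCompact_closedBall _ _)
          (ε/((1 + M')^2 + 1)) (by positivity)] with n hb hrep hcv z hz
      have hGb := hb z hz
      have hcd : sdist ((G n z : ℂ) : OnePoint ℂ) ((ψ z : ℂ) : OnePoint ℂ) < ε/((1 + M')^2 + 1) := by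
        have h0 : sdist (rescale f α β (h (σ n)) z) (φ z) < ε/((1 + M')^2 + 1) := hcv z hz
        rwa [(hrep z hz).1, hφcoe z] at h0
      have hsub : ‖G n z - ψ z‖ ≤ sdist ((G n z : ℂ) : OnePoint ℂ) ((ψ z : ℂ) : OnePoint ℂ)
          * (1 + M')^2 :=
        norm_sub_le_of_sdist (le_trans hGb (le_max_left _ _)) (le_trans (hψb z) (le_max_right _ _))
      rw [dist_eq_norm, norm_sub_rev]
      calc ‖G n z - ψ z‖ ≤ _ := hsub
      _ < (ε/((1 + M')^2 + 1)) * (1 + M')^2 := by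
          apply mul_lt_mul_of_pos_right hcd (by positivity)
      _ < ε := by
          rw [div_mul_eq_mul_div, div_lt_iff₀ hden]
          nlinarith
    have hdiffG : ∀ᶠ n in atTop, DifferentiableOn ℂ (G n) (Metric.ball 0 r) := by
      filter_upwards [hrepr r hrpos] with n hrep
      intro z hz
      have hzK : z ∈ Metric.closedBall (0:ℂ) r := Metric.ball_subset_closedBall hz
      exact (G_differentiableAt hf.merom α β (h (σ n)) ((hrep z hzK).2)).differentiableWithinAt
    have hψdiff : DifferentiableOn ℂ ψ (Metric.ball 0 r) :=
      (hUnif.tendstoLocallyUniformlyOn.mono Metric.ball_subset_closedBall).differentiableOn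
        hdiffG Metric.isOpen_ball
    have hz₁mem : Metric.ball (0:ℂ) r ∈ 𝓝 z₁ := by
      apply Metric.isOpen_ball.mem_nhds
      rw [Metric.mem_ball, dist_zero_right, hrdef]
      linarith
    exact (hψdiff.differentiableAt hz₁mem)
  -- Liouville
  have hbdd : Bornology.IsBounded (range ψ) := by
    apply (Metric.isBounded_closedBall (x := (0:ℂ)) (r := B')).subset
    rintro x ⟨z, rfl⟩
    rw [Metric.mem_closedBall, dist_zero_right]
    exact hψb z
  apply hnc
  refine ⟨((ψ 0 : ℂ) : OnePoint ℂ), fun z _ => ?_⟩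
  rw [hφcoe z, hdiffψ.apply_eq_apply_of_bounded hbdd z 0]

end Stmt6

namespace Stmt6

lemma smulS_sinv {c : ℂ} (hc : c ≠ 0) (x : OnePoint ℂ) :
    smulS c⁻¹ (sinv x) = sinv (smulS c x) := by
  induction x using OnePoint.rec
  · rw [sinv_infty, smulS_infty, sinv_infty, smulS_coe, mul_zero]
  · rename_i a
    by_cases ha : a = 0
    · subst ha
      rw [smulS_coe, mul_zero, sinv_coe_zero, smulS_infty]
    · have hca : c * a ≠ 0 := mul_ne_zero hc ha
      rw [smulS_coe, sinv_coe_of_ne ha, sinv_coe_of_ne hca, smulS_coe, mul_inv]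

lemma rescale_sinv (f : ℂ → OnePoint ℂ) (α β : ℝ) {h : ℂ} (hh : h ≠ 0) (z : ℂ) :
    rescale (fun w => sinv (f w)) (-α) β h z = sinv (rescale f α β h z) := by
  have hexp : h ^ (-((-α : ℝ) : ℂ)) = (h ^ (-(α:ℂ)))⁻¹ := by
    rw [show (-((-α : ℝ) : ℂ)) = -(-(α : ℂ)) by push_cast; ring, Complex.cpow_neg]
  rw [rescale_apply, rescale_apply, hexp]
  exact smulS_sinv (cpow_neg_real_ne_zero hh α) _

lemma zeros_eq_poles_sinv (f : ℂ → OnePoint ℂ) :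
    zeros f = poles (fun z => sinv (f z)) := by
  ext z
  simp only [zeros, poles, mem_setOf_eq]
  exact sinv_eq_infty_iff.symm

/-- Transfer of membership in the Yosida class under inversion. -/
lemma memY_sinv {f : ℂ → OnePoint ℂ} {α β : ℝ} (hβ : -1 < β) (hf : MemY α β f) :
    MemY (-α) β (fun z => sinv (f z)) := by
  have hne0 : ∀ h : ℂ, 1 ≤ ‖h‖ → h ≠ 0 := by
    intro h h1 h0
    rw [h0, norm_zero] at h1; linarith
  constructor
  · -- meromorphy
    intro z hz
    rcases hf.merom z hz with ⟨g, hg, hev⟩ | ⟨g, hg, hev⟩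
    · right
      exact ⟨g, hg, by filter_upwards [hev] with w hw; rw [hw]⟩
    · left
      exact ⟨g, hg, by filter_upwards [hev] with w hw; rw [hw, sinv_sinv]⟩
  · -- transcendence
    rintro ⟨p, q, hq, heq⟩
    by_cases hp : p = 0
    · -- then f = ∞ off a finite set, contradicting non-constancy of limits
      subst hp
      have hT : Set.Finite {x : ℂ | q.IsRoot x} := Polynomial.finite_setOf_isRoot hq
      obtain ⟨RT, hRT⟩ := (Metric.isBounded_iff_subset_closedBall 0).1 hT.isBounded
      have hfinf : ∀ z : ℂ, RT < ‖z‖ → f z = ∞ := by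
        intro z hz
        have hqz : q.eval z ≠ 0 := by
          intro h0
          have hmem : z ∈ Metric.closedBall (0:ℂ) RT := hRT h0
          rw [Metric.mem_closedBall, dist_zero_right] at hmem
          linarith
        have h1 := heq z hqz
        rw [Polynomial.eval_zero, zero_div] at h1
        exact sinv_eq_zero_iff.1 h1
      set h : ℕ → ℂ := fun n => ((1 + n : ℝ) : ℂ) with hhdef
      have hnorm : ∀ n : ℕ, ‖h n‖ = 1 + n := by
        intro n
        rw [hhdef]
        simp only []
        rw [Complex.norm_real, Real.norm_of_nonneg (by positivity)]
      have h1 : ∀ n : ℕ, 1 ≤ ‖h n‖ := by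
        intro n
        rw [hnorm n]
        have : (0:ℝ) ≤ n := Nat.cast_nonneg n
        linarith
      have htend : Tendsto (fun n => ‖h n‖) atTop atTop := by
        apply Tendsto.congr (f₁ := fun n : ℕ => 1 + (n:ℝ))
        · intro n; rw [hnorm n]
        · exact tendsto_atTop_add_const_left atTop 1 tendsto_natCast_atTop_atTop
      have hconv : SphConvOn (fun n => rescale f α β (h n)) (fun _ => ∞) Set.univ := by
        intro K hKu hK ε hε
        obtain ⟨r, hr⟩ := (Metric.isBounded_iff_subset_closedBall 0).1 hK.isBounded
        have hr0 : K ⊆ Metric.closedBall 0 (max r 0) :=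
          subset_trans hr (Metric.closedBall_subset_closedBall (le_max_left _ _))
        filter_upwards [arg_norm_eventually β hβ h1 htend (max r 0) RT (le_max_right _ _)]
          with n hn z hz
        have hpt := hn z (hr0 hz)
        have hfp := hfinf _ hpt
        have hres : rescale f α β (h n) z = ∞ := by
          rw [rescale_apply, hfp]; rfl
        rw [hres, sdist_infty_infty]
        exact hε
      exact hf.nonconst h (fun _ => ∞) h1 htend hconv ⟨∞, fun z _ => rfl⟩
    · -- otherwise f itself would be rational
      apply hf.trans
      refine ⟨q*q, p*q, mul_ne_zero hp hq, fun z hz => ?_⟩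
      rw [Polynomial.eval_mul] at hz
      have hpz : p.eval z ≠ 0 := fun h0 => hz (by rw [h0, zero_mul])
      have hqz : q.eval z ≠ 0 := fun h0 => hz (by rw [h0, mul_zero])
      have h1 := heq z hqz
      have hdiv : p.eval z / q.eval z ≠ 0 := div_ne_zero hpz hqz
      have h2 := congrArg sinv h1
      rw [sinv_sinv, sinv_coe_of_ne hdiv] at h2
      rw [h2, Polynomial.eval_mul, Polynomial.eval_mul]
      congr 1
      rw [inv_div, mul_div_mul_right _ _ hqz]
  · -- normality
    intro F hF
    choose hs hs1 hseq using hF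
    obtain ⟨σ, hσ, φ, hφ⟩ := hf.normal (fun n => rescale f α β (hs n))
      (fun n => ⟨hs n, hs1 n, rfl⟩)
    refine ⟨σ, hσ, fun z => sinv (φ z), ?_⟩
    intro K hKu hK ε hε
    filter_upwards [hφ K hKu hK ε hε] with n hn z hz
    have h0 : sdist (rescale f α β (hs (σ n)) z) (φ z) < ε := hn z hz
    have he : F (σ n) z = sinv (rescale f α β (hs (σ n)) z) := by
      rw [hseq (σ n)]
      exact rescale_sinv f α β (hne0 _ (hs1 (σ n))) z
    calc sdist (F (σ n) z) (sinv (φ z))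
        = sdist (sinv (rescale f α β (hs (σ n)) z)) (sinv (φ z)) := by rw [he]
    _ = sdist (rescale f α β (hs (σ n)) z) (φ z) := sdist_sinv _ _
    _ < ε := h0
  · -- non-constancy of limits
    intro hs φ' hs1 hstend hsconv hex
    obtain ⟨c, hc⟩ := hex
    apply hf.nonconst hs (fun z => sinv (φ' z)) hs1 hstend
    · intro K hKu hK ε hε
      filter_upwards [hsconv K hKu hK ε hε] with n hn z hz
      have h0 : sdist (rescale (fun w => sinv (f w)) (-α) β (hs n) z) (φ' z) < ε := hn z hz
      have he : rescale f α β (hs n) z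
          = sinv (rescale (fun w => sinv (f w)) (-α) β (hs n) z) := by
        rw [rescale_sinv f α β (hne0 _ (hs1 n)) z, sinv_sinv]
      calc sdist (rescale f α β (hs n) z) (sinv (φ' z))
          = sdist (sinv (rescale (fun w => sinv (f w)) (-α) β (hs n) z)) (sinv (φ' z)) := by
            rw [he]
      _ = sdist (rescale (fun w => sinv (f w)) (-α) β (hs n) z) (φ' z) := sdist_sinv _ _
      _ < ε := h0
    · exact ⟨sinv c, fun z hz => by rw [hc z hz]⟩

lemma zeros_infinite {f : ℂ → OnePoint ℂ} {α β : ℝ} (hβ : -1 < β) (hf : MemY α β f) :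
    (zeros f).Infinite := by
  rw [zeros_eq_poles_sinv]
  exact poles_infinite hβ (memY_sinv hβ hf)

end Stmt6

/-- every `f ∈ Y_{α,β}` has infinitely many zeros and infinitely many poles. -/
theorem stmt_6 (f : ℂ → OnePoint ℂ) (α β : ℝ) (hβ : -1 < β) (hf : MemY α β f) :
    (zeros f).Infinite ∧ (poles f).Infinite :=
  ⟨Stmt6.zeros_infinite hβ hf, Stmt6.poles_infinite hβ hf⟩

end
end
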